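/- arXiv:2209.01587 — 5 statements merged into one kernel-verified Lean document; each statement's English description precedes it below -/
import Mathlib

section
/- Newton's inequality: for real numbers u_1,…,u_n and 1 ≤ ℓ ≤ n-1, the normalized elementary symmetric means S_ℓ(u) = e_ℓ(u)/C(n,ℓ) satisfy S_{ℓ-1}(u)·S_{ℓ+1}(u) ≤ S_ℓ(u)^2. -/
open Finset Polynomial

/-- The `ℓ`-th elementary symmetric polynomial of `u_1, …, u_n`. -/
def esymmPoly (n : ℕ) (u : Fin n → ℝ) (ℓ : ℕ) : ℝ :=
  ∑ t ∈ Finset.powersetCard ℓ (Finset.univ : Finset (Fin n)), ∏ i ∈ t, u i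

/-- The `ℓ`-th normalized elementary symmetric mean `S_ℓ(u) = e_ℓ(u)/C(n,ℓ)`. -/
noncomputable def esymmMean (n : ℕ) (u : Fin n → ℝ) (ℓ : ℕ) : ℝ :=
  esymmPoly n u ℓ / (n.choose ℓ)

-- connect to multiset esymm
lemma esymmPoly_eq_esymm (n : ℕ) (u : Fin n → ℝ) (ℓ : ℕ) :
    esymmPoly n u ℓ = ((Finset.univ.val.map u).esymm ℓ) := by
  rw [Finset.esymm_map_val]; rfl

lemma card_univ_map (n : ℕ) (u : Fin n → ℝ) :
    Multiset.card (Finset.univ.val.map u) = n := by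
  simp

-- multiset of given card comes from a Fin function
lemma exists_fn (s : Multiset ℝ) (n : ℕ) (h : Multiset.card s = n) :
    ∃ u : Fin n → ℝ, Finset.univ.val.map u = s := by
  subst h
  have hl : s.toList.length = Multiset.card s := Multiset.length_toList s
  refine ⟨fun i => s.toList.get (Fin.cast hl.symm i), ?_⟩
  rw [Fin.univ_val_map]
  have : List.ofFn (fun i : Fin (Multiset.card s) => s.toList.get (Fin.cast hl.symm i))
      = s.toList := by
    apply List.ext_get
    · simp [hl]
    · intro i h1 h2
      simp
  rw [this, Multiset.coe_toList]

lemma reduction (s : Multiset ℝ) (n : ℕ) (hs : Multiset.card s = n) (hn : 1 ≤ n) :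
    ∃ t : Multiset ℝ, Multiset.card t = n - 1 ∧
      ∀ ℓ ≤ n - 1, (n : ℝ) * t.esymm ℓ = ((n - ℓ : ℕ) : ℝ) * s.esymm ℓ := by
  set p : ℝ[X] := ((s.map fun a => -a).map fun a => X - C a).prod with hpdef
  have hp : p = (s.map fun a => X + C a).prod := by
    rw [hpdef, Multiset.map_map]
    congr 1
    apply Multiset.map_congr rfl
    intro a _
    simp [sub_neg_eq_add]
  have hproots : p.roots = s.map fun a => -a := roots_multiset_prod_X_sub_C _
  have hpm : p.Monic := monic_multiset_prod_of_monic _ _ (fun a _ => monic_X_sub_C a)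
  have hdeg : p.natDegree = n := by
    rw [natDegree_multiset_prod_X_sub_C_eq_card, Multiset.card_map, hs]
  have hcoeff : ∀ k, k ≤ n → p.coeff k = s.esymm (n - k) := by
    intro k hk
    rw [hp, Multiset.prod_X_add_C_coeff s (by rw [hs]; exact hk), hs]
  set q := derivative p with hq
  have hqc : ∀ k, q.coeff k = p.coeff (k + 1) * (k + 1) := fun k => coeff_derivative p k
  have hqtop : q.coeff (n - 1) = n := by
    rw [hqc, Nat.sub_add_cancel hn]
    have : p.coeff n = 1 := by rw [← hdeg]; exact hpm.coeff_natDegree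
    rw [this, one_mul, Nat.cast_sub hn]
    push_cast
    ring
  have hn0 : (n : ℝ) ≠ 0 := Nat.cast_ne_zero.2 (by omega)
  have hqdeg : q.natDegree = n - 1 := by
    have hle := natDegree_derivative_le p
    rw [← hq] at hle
    have hge : n - 1 ≤ q.natDegree := le_natDegree_of_ne_zero (by rw [hqtop]; exact hn0)
    omega
  have hqdeg' : q.natDegree = n - 1 := hqdeg
  have hqroots : Multiset.card q.roots = n - 1 := by
    have h1 : Multiset.card q.roots ≤ n - 1 := hqdeg ▸ q.card_roots'
    have h2 : Multiset.card p.roots ≤ Multiset.card q.roots + 1 :=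
      p.card_roots_le_derivative
    rw [hproots, Multiset.card_map, hs] at h2
    omega
  have hql : q.leadingCoeff = n := by
    rw [leadingCoeff, hqdeg, hqtop]
  have hfact : C (n : ℝ) * (q.roots.map fun a => X - C a).prod = q := by
    rw [← hql]; exact C_leadingCoeff_mul_prod_multiset_X_sub_C (by rw [hqroots, hqdeg])
  refine ⟨q.roots.map fun a => -a, by rw [Multiset.card_map, hqroots], ?_⟩
  intro ℓ hℓ
  set t := q.roots.map fun a => -a with ht
  have hcardt : Multiset.card t = n - 1 := by rw [ht, Multiset.card_map, hqroots]
  have htprod : (t.map fun a => X + C a).prod = (q.roots.map fun a => X - C a).prod := by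
    rw [ht, Multiset.map_map]
    congr 1
    apply Multiset.map_congr rfl
    intro a _
    simp [sub_eq_add_neg]
  set k := n - 1 - ℓ with hk
  have hkt : k ≤ Multiset.card t := by omega
  have h1 : t.esymm ℓ = (t.map fun a => X + C a).prod.coeff k := by
    rw [Multiset.prod_X_add_C_coeff t hkt, hcardt]
    congr 1
    omega
  have h2 : (n : ℝ) * t.esymm ℓ = q.coeff k := by
    conv_rhs => rw [← hfact]
    rw [coeff_C_mul, h1, htprod]
  rw [h2, hqc, hcoeff (k + 1) (by omega)]
  have e1 : n - (k + 1) = ℓ := by omega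
  have e2 : ((k : ℝ) + 1) = ((n - ℓ : ℕ) : ℝ) := by
    have : k + 1 = n - ℓ := by omega
    push_cast [← this]
    ring
  rw [e1, e2]
  ring

lemma sq_sum_eq_e2 (n : ℕ) (w : Fin n → ℝ) :
    (∑ i, w i) ^ 2 = (∑ i, w i ^ 2) + 2 * esymmPoly n w 2 := by
  classical
  have hlt : esymmPoly n w 2
      = ∑ p ∈ (Finset.univ.offDiag : Finset (Fin n × Fin n)) with p.1 < p.2,
          w p.1 * w p.2 := by
    refine (Finset.sum_bij (fun p _ => ({p.1, p.2} : Finset (Fin n))) ?_ ?_ ?_ ?_).symm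
    · rintro ⟨a, b⟩ hab
      simp only [mem_filter, mem_offDiag] at hab
      simp [Finset.mem_powersetCard, Finset.card_pair (ne_of_lt hab.2)]
    · rintro ⟨a, b⟩ hab ⟨c, d⟩ hcd h
      simp only [mem_filter, mem_offDiag] at hab hcd
      have h' : ({a, b} : Finset (Fin n)) = {c, d} := h
      have hac : a ∈ ({c, d} : Finset (Fin n)) := h' ▸ (by simp)
      have hbd : b ∈ ({c, d} : Finset (Fin n)) := h' ▸ (by simp)
      have hca : c ∈ ({a, b} : Finset (Fin n)) := h'.symm ▸ (by simp)
      have hda : d ∈ ({a, b} : Finset (Fin n)) := h'.symm ▸ (by simp)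
      simp only [Finset.mem_insert, Finset.mem_singleton] at hac hbd hca hda
      have h1 := hab.2; have h2 := hcd.2
      rcases hac with rfl | rfl
      · rcases hbd with rfl | rfl
        · exact absurd h1 (lt_irrefl _)
        · rfl
      · rcases hbd with rfl | rfl
        · exact absurd (h1.trans h2) (lt_irrefl _)
        · exact absurd h1 (lt_irrefl _)
    · intro t htmem
      rw [Finset.mem_powersetCard] at htmem
      obtain ⟨a, b, hab, rfl⟩ := Finset.card_eq_two.mp htmem.2
      rcases hab.lt_or_gt with h | h
      · exact ⟨(a, b), by simp [Finset.mem_offDiag, hab, h], rfl⟩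
      · exact ⟨(b, a), by simp [Finset.mem_offDiag, hab.symm, h], by
          rw [Finset.pair_comm]⟩
    · rintro ⟨a, b⟩ hab
      simp only [mem_filter, mem_offDiag] at hab
      rw [Finset.prod_pair (ne_of_lt hab.2)]
  have hswap : ∑ p ∈ (Finset.univ.offDiag : Finset (Fin n × Fin n)) with ¬ p.1 < p.2,
      w p.1 * w p.2
      = ∑ p ∈ (Finset.univ.offDiag : Finset (Fin n × Fin n)) with p.1 < p.2,
          w p.1 * w p.2 := by
    refine Finset.sum_nbij' (fun p => p.swap) (fun p => p.swap) ?_ ?_ ?_ ?_ ?_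
    · rintro ⟨a, b⟩ hab
      simp only [mem_filter, mem_offDiag] at hab ⊢
      have : a ≠ b := hab.1.2.2
      exact ⟨⟨by simp, by simp, this.symm⟩, lt_of_le_of_ne (not_lt.mp hab.2) this.symm⟩
    · rintro ⟨a, b⟩ hab
      simp only [mem_filter, mem_offDiag] at hab ⊢
      exact ⟨⟨by simp, by simp, (ne_of_lt hab.2).symm⟩, not_lt.mpr (le_of_lt hab.2)⟩
    · rintro ⟨a, b⟩ _; rfl
    · rintro ⟨a, b⟩ _; rfl
    · rintro ⟨a, b⟩ _; dsimp; ring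
  have hoff : ∑ p ∈ (Finset.univ.offDiag : Finset (Fin n × Fin n)), w p.1 * w p.2
      = 2 * esymmPoly n w 2 := by
    rw [← Finset.sum_filter_add_sum_filter_not Finset.univ.offDiag (fun p => p.1 < p.2),
      hswap, ← hlt]
    ring
  have hdiag : ∑ p ∈ (Finset.univ.diag : Finset (Fin n × Fin n)), w p.1 * w p.2
      = ∑ i, w i ^ 2 := by
    refine Finset.sum_nbij' (fun p => p.1) (fun i => (i, i)) ?_ ?_ ?_ ?_ ?_
    · intro p _; exact Finset.mem_univ _
    · intro i _; simp [Finset.mem_diag]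
    · rintro ⟨a, b⟩ hab
      rw [Finset.mem_diag] at hab
      exact Prod.ext rfl hab.2
    · intro i _; rfl
    · rintro ⟨a, b⟩ hab
      rw [Finset.mem_diag] at hab
      rw [← hab.2, sq]
  have hprod : ∑ p ∈ (Finset.univ ×ˢ Finset.univ : Finset (Fin n × Fin n)),
      w p.1 * w p.2 = (∑ i, w i) ^ 2 := by
    rw [Finset.sum_product]
    rw [sq, Finset.sum_mul_sum]
  rw [← hprod, ← Finset.diag_union_offDiag,
    Finset.sum_union (Finset.disjoint_diag_offDiag _), hdiag, hoff]

lemma esymmPoly_one (n : ℕ) (w : Fin n → ℝ) : esymmPoly n w 1 = ∑ i, w i := by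
  unfold esymmPoly
  rw [Finset.powersetCard_one, Finset.sum_map]
  simp

lemma esymmPoly_top (n : ℕ) (u : Fin n → ℝ) : esymmPoly n u n = ∏ i, u i := by
  unfold esymmPoly
  have h : Finset.powersetCard n (Finset.univ : Finset (Fin n)) = {Finset.univ} := by
    have h2 := Finset.powersetCard_self (Finset.univ : Finset (Fin n))
    rwa [Finset.card_univ, Fintype.card_fin] at h2
  rw [h, Finset.sum_singleton]

lemma newton_one (n : ℕ) (hn : 2 ≤ n) (w : Fin n → ℝ) :
    esymmPoly n w 2 / (n.choose 2) ≤ (esymmPoly n w 1 / n) ^ 2 := by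
  have hA := sq_sum_eq_e2 n w
  have hCS : (∑ i, w i) ^ 2 ≤ (n : ℝ) * ∑ i, w i ^ 2 := by
    have := sq_sum_le_card_mul_sum_sq (s := (Finset.univ : Finset (Fin n))) (f := w)
    simpa using this
  have hch : (n.choose 2) * 2 = n * (n - 1) := by
    rw [Nat.choose_two_right]
    rw [Nat.div_mul_cancel]
    rcases Nat.even_or_odd n with h | h
    · exact Dvd.dvd.mul_right h.two_dvd _
    · refine Dvd.dvd.mul_left ?_ _
      have : Even (n - 1) := by
        rcases h with ⟨k, hk⟩; exact ⟨k, by omega⟩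
      exact this.two_dvd
  have hchR : (n.choose 2 : ℝ) * 2 = n * (n - 1) := by
    have : ((n.choose 2 * 2 : ℕ) : ℝ) = ((n * (n - 1) : ℕ) : ℝ) := by exact_mod_cast hch
    push_cast [Nat.cast_sub (by omega : 1 ≤ n)] at this
    linarith
  have hc2 : (0:ℝ) < (n.choose 2 : ℝ) := by
    exact_mod_cast Nat.choose_pos (by omega)
  have hnR : (0:ℝ) < (n:ℝ) := by exact_mod_cast Nat.lt_of_lt_of_le Nat.zero_lt_two hn
  rw [esymmPoly_one, div_pow, div_le_div_iff₀ hc2 (by positivity)]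
  nlinarith [mul_le_mul_of_nonneg_left hCS (le_of_lt hnR)]

lemma esymm_compl (n k : ℕ) (hk : k ≤ n) (u : Fin n → ℝ) (hu : ∀ i, u i ≠ 0) :
    esymmPoly n u (n - k) = (∏ i, u i) * esymmPoly n (fun i => (u i)⁻¹) k := by
  classical
  unfold esymmPoly
  rw [Finset.mul_sum]
  refine Finset.sum_nbij' (fun t => tᶜ) (fun t => tᶜ) ?_ ?_ ?_ ?_ ?_
  · intro t ht
    rw [Finset.mem_powersetCard] at ht ⊢
    refine ⟨Finset.subset_univ _, ?_⟩
    rw [Finset.card_compl, ht.2]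
    simp only [Fintype.card_fin]
    omega
  · intro t ht
    rw [Finset.mem_powersetCard] at ht ⊢
    refine ⟨Finset.subset_univ _, ?_⟩
    rw [Finset.card_compl, ht.2]
    simp only [Fintype.card_fin]
  · intro t _; exact compl_compl t
  · intro t _; exact compl_compl t
  · intro t ht
    rw [Finset.prod_inv_distrib]
    rw [eq_comm, mul_inv_eq_iff_eq_mul₀ (Finset.prod_ne_zero_iff.2 fun i _ => hu i)]
    rw [← Finset.prod_mul_prod_compl t u]
lemma newton_base (ℓ : ℕ) (h1 : 1 ≤ ℓ) (u : Fin (ℓ + 1) → ℝ) :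
    esymmMean (ℓ+1) u (ℓ-1) * esymmMean (ℓ+1) u (ℓ+1) ≤ esymmMean (ℓ+1) u ℓ ^ 2 := by
  classical
  have htopP : esymmPoly (ℓ+1) u (ℓ+1) = ∏ i, u i := esymmPoly_top _ u
  by_cases hz : ∃ i, u i = 0
  · obtain ⟨i, hi⟩ := hz
    have hP0 : esymmMean (ℓ+1) u (ℓ+1) = 0 := by
      unfold esymmMean
      rw [htopP, Finset.prod_eq_zero (Finset.mem_univ i) hi]
      simp
    rw [hP0, mul_zero]
    positivity
  · push_neg at hz
    have hA := esymm_compl (ℓ+1) 2 (by omega) u hz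
    rw [show ℓ+1-2 = ℓ-1 by omega] at hA
    have hB := esymm_compl (ℓ+1) 1 (by omega) u hz
    rw [show ℓ+1-1 = ℓ by omega] at hB
    have hCa : ((ℓ+1).choose (ℓ-1)) = (ℓ+1).choose 2 := by
      rw [show ℓ-1 = ℓ+1-2 by omega, Nat.choose_symm (by omega)]
    have hCb : ((ℓ+1).choose ℓ) = ℓ+1 := by
      exact Nat.choose_succ_self_right ℓ
    have key := newton_one (ℓ+1) (by omega) (fun i => (u i)⁻¹)
    unfold esymmMean
    rw [hA, hB, hCa, hCb, htopP, Nat.choose_self, Nat.cast_one, div_one]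
    set P := ∏ i, u i with hP
    set e2 := esymmPoly (ℓ+1) (fun i => (u i)⁻¹) 2 with he2
    set e1 := esymmPoly (ℓ+1) (fun i => (u i)⁻¹) 1 with he1
    have h2 : P * e2 / (((ℓ+1).choose 2 : ℕ) : ℝ) * P
        = P^2 * (e2 / (((ℓ+1).choose 2 : ℕ) : ℝ)) := by ring
    have h3 : (P * e1 / ((ℓ+1 : ℕ) : ℝ))^2 = P^2 * ((e1 / ((ℓ+1 : ℕ) : ℝ))^2) := by
      ring
    rw [h2, h3]
    exact mul_le_mul_of_nonneg_left key (sq_nonneg P)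

lemma mean_eq (n : ℕ) (hn : 1 ≤ n) (s t : Multiset ℝ) (ℓ : ℕ) (hℓ : ℓ ≤ n - 1)
    (hrel : (n : ℝ) * t.esymm ℓ = ((n - ℓ : ℕ) : ℝ) * s.esymm ℓ) :
    t.esymm ℓ / ((n-1).choose ℓ) = s.esymm ℓ / (n.choose ℓ) := by
  have hc1 : 0 < (n-1).choose ℓ := Nat.choose_pos hℓ
  have hc2 : 0 < n.choose ℓ := Nat.choose_pos (by omega)
  have hid : ((n-1).choose ℓ) * n = n.choose ℓ * (n - ℓ) := by
    have h := Nat.choose_mul_succ_eq (n-1) ℓ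
    rwa [Nat.sub_add_cancel hn] at h
  have hidR : (((n-1).choose ℓ : ℝ)) * n = (n.choose ℓ : ℝ) * ((n - ℓ : ℕ) : ℝ) := by
    exact_mod_cast congrArg (Nat.cast : ℕ → ℝ) hid
  have hc1R : (0:ℝ) < ((n-1).choose ℓ : ℝ) := by exact_mod_cast hc1
  have hc2R : (0:ℝ) < (n.choose ℓ : ℝ) := by exact_mod_cast hc2
  have hnR : ((n:ℝ)) ≠ 0 := by positivity
  rw [div_eq_div_iff hc1R.ne' hc2R.ne']
  have goal_n : (n:ℝ) * (t.esymm ℓ * (n.choose ℓ : ℝ))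
      = (n:ℝ) * (s.esymm ℓ * (((n-1).choose ℓ : ℝ))) := by
    calc (n:ℝ) * (t.esymm ℓ * (n.choose ℓ : ℝ))
        = ((n:ℝ) * t.esymm ℓ) * (n.choose ℓ : ℝ) := by ring
      _ = (((n - ℓ : ℕ) : ℝ) * s.esymm ℓ) * (n.choose ℓ : ℝ) := by rw [hrel]
      _ = s.esymm ℓ * ((n.choose ℓ : ℝ) * ((n - ℓ : ℕ) : ℝ)) := by ring
      _ = s.esymm ℓ * ((((n-1).choose ℓ : ℝ)) * n) := by rw [hidR]
      _ = (n:ℝ) * (s.esymm ℓ * (((n-1).choose ℓ : ℝ))) := by ring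
  exact mul_left_cancel₀ hnR goal_n

theorem newton_aux : ∀ n : ℕ, ∀ ℓ : ℕ, 1 ≤ ℓ → ℓ + 1 ≤ n → ∀ u : Fin n → ℝ,
    esymmMean n u (ℓ-1) * esymmMean n u (ℓ+1) ≤ esymmMean n u ℓ ^ 2 := by
  intro n
  induction n using Nat.strong_induction_on with
  | _ n ih =>
    intro ℓ h1 h2 u
    rcases eq_or_lt_of_le h2 with heq | hlt
    · subst heq
      exact newton_base ℓ h1 u
    · have hn1 : 1 ≤ n := by omega
      obtain ⟨t, hct, hrel⟩ := reduction (Finset.univ.val.map u) n (by simp) hn1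
      obtain ⟨v, hv⟩ := exists_fn t (n-1) hct
      have hkey : ∀ k, k ≤ n - 1 → esymmMean (n-1) v k = esymmMean n u k := by
        intro k hk
        unfold esymmMean
        rw [esymmPoly_eq_esymm, esymmPoly_eq_esymm, hv]
        exact mean_eq n hn1 _ t k hk (hrel k hk)
      rw [← hkey (ℓ-1) (by omega), ← hkey (ℓ+1) (by omega), ← hkey ℓ (by omega)]
      exact ih (n-1) (by omega) ℓ h1 (by omega) v

/-- Newton's inequality: `S_{ℓ-1}(u) · S_{ℓ+1}(u) ≤ S_ℓ(u)^2` for `1 ≤ ℓ ≤ n - 1`. -/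
theorem newton_inequality (n : ℕ) (u : Fin n → ℝ) (ℓ : ℕ)
    (h1 : 1 ≤ ℓ) (h2 : ℓ + 1 ≤ n) :
    esymmMean n u (ℓ - 1) * esymmMean n u (ℓ + 1) ≤ (esymmMean n u ℓ) ^ 2 := by
  exact newton_aux n ℓ h1 h2 u
end

section
/- Maclaurin's inequality: for nonnegative reals u_1,…,u_n and 1 ≤ ℓ < ℓ' ≤ n, one has S_ℓ(u)^{1/ℓ} ≥ S_{ℓ'}(u)^{1/ℓ'}, where S_ℓ(u) = e_ℓ(u)/C(n,ℓ), with equality when all u_i are equal. -/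
open Finset

namespace MacAux
open Multiset Polynomial

lemma esymm_zero' (s : Multiset ℝ) : s.esymm 0 = 1 := by
  simp [Multiset.esymm]

lemma esymm_cons (a : ℝ) (s : Multiset ℝ) (k : ℕ) :
    (a ::ₘ s).esymm (k + 1) = s.esymm (k + 1) + a * s.esymm k := by
  simp only [Multiset.esymm, powersetCard_cons, Multiset.map_add, Multiset.sum_add,
    Multiset.map_map, Function.comp_def, Multiset.prod_cons]
  rw [Multiset.sum_map_mul_left]

lemma esymm_one' (s : Multiset ℝ) : s.esymm 1 = s.sum := by
  simp [Multiset.esymm, Multiset.powersetCard_one, Multiset.map_map, Function.comp_def]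

lemma esymm_of_card_lt {s : Multiset ℝ} {k : ℕ} (h : Multiset.card s < k) : s.esymm k = 0 := by
  simp [Multiset.esymm, powersetCard_eq_empty _ h]

lemma esymm_card (s : Multiset ℝ) : s.esymm (Multiset.card s) = s.prod := by
  induction s using Multiset.induction with
  | empty => simp [esymm_zero']
  | cons a s ih =>
    rw [Multiset.card_cons, esymm_cons, esymm_of_card_lt (by simp), ih, Multiset.prod_cons]
    ring


lemma cauchy (s : Multiset ℝ) :
    s.sum ^ 2 ≤ (Multiset.card s : ℝ) * (s.map (· ^ 2)).sum := by
  induction s using Multiset.induction with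
  | empty => simp
  | cons a s ih =>
    by_cases hs0 : s = 0
    · subst hs0; simp
    · simp only [Multiset.sum_cons, Multiset.card_cons, Multiset.map_cons, Nat.cast_add,
        Nat.cast_one]
      have hc : (0 : ℝ) ≤ (Multiset.card s : ℝ) := Nat.cast_nonneg _
      have hc1 : (1 : ℝ) ≤ (Multiset.card s : ℝ) := by
        exact_mod_cast Nat.one_le_iff_ne_zero.2 (by simpa using hs0)
      nlinarith [sq_nonneg ((Multiset.card s : ℝ) * a - s.sum), sub_nonneg.2 ih,
        mul_nonneg hc (sub_nonneg.2 ih)]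

lemma sq_sum_eq (s : Multiset ℝ) :
    s.sum ^ 2 = (s.map (· ^ 2)).sum + 2 * s.esymm 2 := by
  induction s using Multiset.induction with
  | empty => simp [esymm_of_card_lt (s := 0) (k := 2) (by simp)]
  | cons a s ih =>
    have h2 : (a ::ₘ s).esymm 2 = s.esymm 2 + a * s.esymm 1 := esymm_cons a s 1
    rw [Multiset.sum_cons, Multiset.map_cons, Multiset.sum_cons, h2, esymm_one']
    ring_nf
    ring_nf at ih
    linarith [ih]

lemma esymm_inv (s : Multiset ℝ) (hs : ∀ x ∈ s, x ≠ 0) :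
    ∀ j ≤ Multiset.card s,
      s.esymm j = s.prod * ((s.map (·⁻¹)).esymm (Multiset.card s - j)) := by
  induction s using Multiset.induction with
  | empty =>
    intro j hj
    have : j = 0 := by simpa using hj
    subst this
    simp [esymm_zero']
  | cons a s ih =>
    intro j hj
    have ha : a ≠ 0 := hs a (Multiset.mem_cons_self _ _)
    have hs' : ∀ x ∈ s, x ≠ 0 := fun x hx => hs x (Multiset.mem_cons_of_mem hx)
    have hmap : (a ::ₘ s).map (·⁻¹) = a⁻¹ ::ₘ s.map (·⁻¹) := by simp
    have hic : Multiset.card (s.map (·⁻¹)) = Multiset.card s := Multiset.card_map _ _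
    have hecard : (s.map (·⁻¹)).esymm (Multiset.card s) = s.prod⁻¹ := by
      rw [← hic, esymm_card, Multiset.prod_map_inv, Multiset.map_id']
    cases j with
    | zero =>
      rw [esymm_zero', hmap, Nat.sub_zero, Multiset.card_cons, esymm_cons, hecard,
        esymm_of_card_lt (by simp), Multiset.prod_cons]
      have hP : s.prod ≠ 0 := Multiset.prod_ne_zero (fun h0 => hs' 0 h0 rfl)
      field_simp
      ring
    | succ j' =>
      rw [Multiset.card_cons] at hj
      rw [esymm_cons, hmap, Multiset.card_cons]
      rcases Nat.lt_or_ge (j' + 1) (Multiset.card s + 1) with hlt | hge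
      · have h1 : j' + 1 ≤ Multiset.card s := by omega
        have h2 : j' ≤ Multiset.card s := by omega
        rw [ih hs' (j' + 1) h1, ih hs' j' h2, Multiset.prod_cons]
        have e1 : Multiset.card s + 1 - (j' + 1) = (Multiset.card s - (j' + 1)) + 1 := by omega
        rw [e1, esymm_cons]
        have e2 : Multiset.card s - (j' + 1) + 1 = Multiset.card s - j' := by omega
        rw [e2]
        field_simp
        ring
      · have h2 : j' = Multiset.card s := by omega
        rw [h2, Nat.sub_self, esymm_zero', esymm_of_card_lt (by omega), esymm_card,
          Multiset.prod_cons]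
        ring


lemma deriv_step (s : Multiset ℝ) (hs : 1 ≤ Multiset.card s) :
    ∃ t : Multiset ℝ, Multiset.card t = Multiset.card s - 1 ∧
      ∀ j ≤ Multiset.card s - 1,
        (Multiset.card s : ℝ) * t.esymm j = ((Multiset.card s - j : ℕ) : ℝ) * s.esymm j := by
  classical
  set n := Multiset.card s with hn
  set p : ℝ[X] := (s.map fun a => X - C a).prod with hp
  have hproots : p.roots = s := roots_multiset_prod_X_sub_C s
  have hpdeg : p.natDegree = n := by
    rw [hp, natDegree_multiset_prod_X_sub_C_eq_card]
  have hpmonic : p.Monic := monic_multiset_prod_of_monic _ _ fun a _ => monic_X_sub_C a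
  set q : ℝ[X] := derivative p with hq
  -- leading coefficient of q
  have hqcoeff : q.coeff (n - 1) = n := by
    rw [hq, coeff_derivative]
    have : n - 1 + 1 = n := by omega
    rw [this]
    have : p.coeff n = 1 := by
      rw [← hpdeg]; exact hpmonic.coeff_natDegree
    rw [this, one_mul]
    push_cast [this]
    norm_cast
  have hqne : q ≠ 0 := fun h => by
    rw [h, coeff_zero] at hqcoeff
    have : (n : ℝ) ≠ 0 := by positivity
    exact this hqcoeff.symm
  have hqdeg : q.natDegree = n - 1 := by
    have hle : q.natDegree ≤ n - 1 := hpdeg ▸ natDegree_derivative_le p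
    have hge : n - 1 ≤ q.natDegree := le_natDegree_of_ne_zero (by
      rw [hqcoeff]; positivity)
    omega
  have hqlead : q.leadingCoeff = n := by
    rw [leadingCoeff, hqdeg, hqcoeff]
  have hrootscard : Multiset.card q.roots = n - 1 := by
    have h1 : Multiset.card p.roots ≤ Multiset.card q.roots + 1 := p.card_roots_le_derivative
    have h2 : Multiset.card q.roots ≤ q.natDegree := q.card_roots'
    rw [hproots] at h1
    omega
  refine ⟨q.roots, hrootscard, fun j hj => ?_⟩
  have hfac : C q.leadingCoeff * (q.roots.map fun a => X - C a).prod = q :=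
    C_leadingCoeff_mul_prod_multiset_X_sub_C (by rw [hrootscard, hqdeg])
  -- compute q.coeff (n - 1 - j) two ways
  have hway1 : q.coeff (n - 1 - j) = ((n - j : ℕ) : ℝ) * ((-1) ^ j * s.esymm j) := by
    rw [hq, coeff_derivative]
    have e1 : n - 1 - j + 1 = n - j := by omega
    rw [e1]
    have e2 : n - j ≤ Multiset.card s := by omega
    have e3 : n - (n - j) = j := by omega
    have e4 : p.coeff (n - j) = (-1) ^ j * s.esymm j := by
      rw [hp, prod_X_sub_C_coeff s e2, ← hn, e3]
    have e5 : ((n - 1 - j : ℕ) : ℝ) + 1 = ((n - j : ℕ) : ℝ) := by exact_mod_cast e1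
    rw [e4, e5]
    ring
  have hway2 : q.coeff (n - 1 - j) = (n : ℝ) * ((-1) ^ j * q.roots.esymm j) := by
    conv_lhs => rw [← hfac]
    rw [coeff_C_mul, hqlead]
    have e2 : n - 1 - j ≤ Multiset.card q.roots := by omega
    rw [prod_X_sub_C_coeff q.roots e2, hrootscard]
    have e3 : n - 1 - (n - 1 - j) = j := by omega
    rw [e3]
  have hthis : ((n - j : ℕ) : ℝ) * ((-1) ^ j * s.esymm j)
      = (n : ℝ) * ((-1) ^ j * q.roots.esymm j) := by rw [← hway1, hway2]
  have hpow : ((-1 : ℝ) ^ j) ≠ 0 := by positivity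
  have h' : (-1 : ℝ) ^ j * ((n : ℝ) * q.roots.esymm j)
      = (-1 : ℝ) ^ j * (((n - j : ℕ) : ℝ) * s.esymm j) := by linear_combination -hthis
  exact mul_left_cancel₀ hpow h'


lemma choose_id (m j : ℕ) (hj : j ≤ m) :
    (m + 1 - j) * (m + 1).choose j = (m + 1) * m.choose j := by
  have h1 := Nat.add_one_mul_choose_eq m j
  have h2 := Nat.choose_succ_right_eq (m + 1) j
  calc (m + 1 - j) * (m + 1).choose j = (m + 1).choose j * (m + 1 - j) := Nat.mul_comm _ _
    _ = (m + 1).choose (j + 1) * (j + 1) := h2.symm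
    _ = (m + 1) * m.choose j := h1.symm

lemma newton_top (s : Multiset ℝ) (m : ℕ) (hc : Multiset.card s = m + 2) :
    (s.esymm m / ((m + 2).choose m)) * (s.esymm (m + 2) / ((m + 2).choose (m + 2)))
      ≤ (s.esymm (m + 1) / ((m + 2).choose (m + 1))) ^ 2 := by
  have htop : s.esymm (m + 2) = s.prod := by rw [← hc, esymm_card]
  by_cases h0 : (0 : ℝ) ∈ s
  · have : s.prod = 0 := Multiset.prod_eq_zero h0
    rw [htop, this]
    simp [sq_nonneg]
  · have hs : ∀ x ∈ s, x ≠ 0 := fun x hx hx0 => h0 (hx0 ▸ hx)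
    set w : Multiset ℝ := s.map (·⁻¹) with hw
    have hcw : Multiset.card w = m + 2 := by rw [hw, Multiset.card_map, hc]
    set P : ℝ := s.prod with hP
    have inv := esymm_inv s hs
    have em : s.esymm m = P * w.esymm 2 := by
      have := inv m (by omega)
      rwa [hc, show m + 2 - m = 2 from by omega] at this
    have em1 : s.esymm (m + 1) = P * w.sum := by
      have := inv (m + 1) (by omega)
      rwa [hc, show m + 2 - (m + 1) = 1 from by omega, esymm_one'] at this
    -- choose values
    have hch2 : ((m + 2).choose m : ℝ) * 2 = (m + 2) * (m + 1) := by
      have hsym : (m + 2).choose m = (m + 2).choose 2 :=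
        (Nat.choose_symm (by omega)).symm.trans (by norm_num)
      have heven : 2 ∣ (m + 2) * (m + 1) := by
        have h := (Nat.even_mul_succ_self (m + 1)).two_dvd
        rwa [Nat.mul_comm] at h
      have hd : (m + 2) * (m + 1) / 2 * 2 = (m + 2) * (m + 1) := Nat.div_mul_cancel heven
      rw [hsym, Nat.choose_two_right, show m + 2 - 1 = m + 1 from rfl]
      exact_mod_cast hd
    have hch1 : ((m + 2).choose (m + 1) : ℕ) = m + 2 := by
      rw [← Nat.choose_symm (by omega : m + 1 ≤ m + 2), show m + 2 - (m + 1) = 1 from by omega,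
        Nat.choose_one_right]
    have hchoosepos : (0 : ℝ) < ((m + 2).choose m : ℝ) := by
      exact_mod_cast Nat.choose_pos (by omega : m ≤ m + 2)
    have key : w.esymm 2 / ((m + 2).choose m : ℝ) ≤ w.sum ^ 2 / ((m + 2 : ℝ)) ^ 2 := by
      rw [div_le_div_iff₀ hchoosepos (by positivity)]
      have hc2 := cauchy w
      have hs2 := sq_sum_eq w
      rw [hcw] at hc2
      push_cast at hc2 hs2 ⊢
      nlinarith [hc2, hs2, hch2]
    calc (s.esymm m / ((m + 2).choose m)) * (s.esymm (m + 2) / ((m + 2).choose (m + 2)))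
        = P ^ 2 * (w.esymm 2 / ((m + 2).choose m : ℝ)) := by
          rw [em, htop, Nat.choose_self]
          push_cast
          ring
      _ ≤ P ^ 2 * (w.sum ^ 2 / ((m + 2 : ℝ)) ^ 2) :=
          mul_le_mul_of_nonneg_left key (sq_nonneg P)
      _ = (s.esymm (m + 1) / ((m + 2).choose (m + 1))) ^ 2 := by
          rw [em1, hch1]
          push_cast
          field_simp


end MacAux

namespace MacAux2
open Multiset Polynomial MacAux

lemma mean_transfer {n j : ℕ} {s t : Multiset ℝ} (hj : j ≤ n - 1) (hn : 1 ≤ n)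
    (h : (n : ℝ) * t.esymm j = ((n - j : ℕ) : ℝ) * s.esymm j) :
    s.esymm j / (n.choose j) = t.esymm j / ((n - 1).choose j) := by
  obtain ⟨m, rfl⟩ : ∃ m, n = m + 1 := ⟨n - 1, by omega⟩
  simp only [Nat.add_sub_cancel] at hj ⊢
  have hid : ((m + 1 - j : ℕ) : ℝ) * ((m + 1).choose j : ℝ) = ((m + 1 : ℕ) : ℝ) * (m.choose j : ℝ) := by
    exact_mod_cast choose_id m j hj
  have hc1 : (0 : ℝ) < ((m + 1).choose j : ℝ) := by
    exact_mod_cast Nat.choose_pos (by omega : j ≤ m + 1)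
  have hc2 : (0 : ℝ) < ((m).choose j : ℝ) := by
    exact_mod_cast Nat.choose_pos hj
  rw [div_eq_div_iff (ne_of_gt hc1) (ne_of_gt hc2)]
  have hne : ((m + 1 : ℕ) : ℝ) ≠ 0 := by positivity
  apply mul_left_cancel₀ hne
  push_cast at h hid ⊢
  linear_combination (-(s.esymm j)) * hid - (((m+1).choose j : ℕ) : ℝ) * h

lemma newton (n : ℕ) : ∀ (s : Multiset ℝ), Multiset.card s = n → ∀ k, 1 ≤ k → k + 1 ≤ n →
    (s.esymm (k - 1) / (n.choose (k - 1))) * (s.esymm (k + 1) / (n.choose (k + 1)))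
      ≤ (s.esymm k / (n.choose k)) ^ 2 := by
  induction n with
  | zero => intro s hc k hk hkn; omega
  | succ N ih =>
    intro s hc k hk hkn
    rcases eq_or_lt_of_le hkn with heq | hlt
    · -- base case : k + 1 = N + 1
      obtain ⟨m, rfl⟩ : ∃ m, k = m + 1 := ⟨k - 1, by omega⟩
      obtain rfl : N = m + 1 := by omega
      have hc' : Multiset.card s = m + 2 := hc
      simpa using newton_top s m hc'
    · -- inductive step via derivative
      obtain ⟨t, hct, htrans⟩ := deriv_step s (by omega)
      rw [hc] at hct htrans
      simp only [Nat.add_sub_cancel] at hct htrans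
      have e1 : s.esymm (k - 1) / ((N + 1).choose (k - 1)) = t.esymm (k - 1) / (N.choose (k - 1)) := by
        have := mean_transfer (n := N + 1) (j := k - 1) (s := s) (t := t) (by omega) (by omega)
          (htrans (k - 1) (by omega))
        simpa using this
      have e2 : s.esymm k / ((N + 1).choose k) = t.esymm k / (N.choose k) := by
        have := mean_transfer (n := N + 1) (j := k) (s := s) (t := t) (by omega) (by omega)
          (htrans k (by omega))
        simpa using this
      have e3 : s.esymm (k + 1) / ((N + 1).choose (k + 1)) = t.esymm (k + 1) / (N.choose (k + 1)) := by
        have := mean_transfer (n := N + 1) (j := k + 1) (s := s) (t := t) (by omega) (by omega)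
          (htrans (k + 1) (by omega))
        simpa using this
      rw [e1, e2, e3]
      exact ih t hct k hk (by omega)


end MacAux2

namespace MacFin
open MacAux MacAux2

variable {n : ℕ} {u : Fin n → ℝ}

lemma esymmPoly_eq (ℓ : ℕ) :
    esymmPoly n u ℓ = ((Finset.univ : Finset (Fin n)).val.map u).esymm ℓ :=
  (Finset.esymm_map_val u Finset.univ ℓ).symm

lemma newton_fin (hk : 1 ≤ ℓ) (hkn : ℓ + 1 ≤ n) :
    esymmMean n u (ℓ - 1) * esymmMean n u (ℓ + 1) ≤ esymmMean n u ℓ ^ 2 := by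
  have hcard : Multiset.card ((Finset.univ : Finset (Fin n)).val.map u) = n := by simp
  have := newton n _ hcard ℓ hk hkn
  simpa only [esymmMean, esymmPoly_eq] using this

lemma esymmPoly_nonneg (hu : ∀ i, 0 ≤ u i) (k : ℕ) : 0 ≤ esymmPoly n u k :=
  Finset.sum_nonneg fun t _ => Finset.prod_nonneg fun i _ => hu i

lemma esymmMean_nonneg (hu : ∀ i, 0 ≤ u i) (k : ℕ) : 0 ≤ esymmMean n u k :=
  div_nonneg (esymmPoly_nonneg hu k) (Nat.cast_nonneg _)

lemma esymmPoly_zero_succ (hu : ∀ i, 0 ≤ u i) {k : ℕ} (h : esymmPoly n u k = 0) :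
    esymmPoly n u (k + 1) = 0 := by
  have hall : ∀ t ∈ Finset.powersetCard k (Finset.univ : Finset (Fin n)),
      (∏ i ∈ t, u i) = 0 := by
    rw [esymmPoly] at h
    intro t ht
    exact (Finset.sum_eq_zero_iff_of_nonneg
      (fun t _ => Finset.prod_nonneg fun i _ => hu i)).1 h t ht
  rw [esymmPoly]
  apply Finset.sum_eq_zero
  intro t ht
  rw [Finset.mem_powersetCard] at ht
  have hne : t.Nonempty := Finset.card_pos.1 (by omega)
  obtain ⟨i, hi⟩ := hne
  rw [← Finset.mul_prod_erase t u hi]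
  have : (∏ j ∈ t.erase i, u j) = 0 := by
    apply hall
    rw [Finset.mem_powersetCard]
    exact ⟨Finset.subset_univ _, by rw [Finset.card_erase_of_mem hi]; omega⟩
  rw [this, mul_zero]

lemma esymmMean_zero_succ (hu : ∀ i, 0 ≤ u i) {k : ℕ} (hkn : k ≤ n)
    (h : esymmMean n u k = 0) : esymmMean n u (k + 1) = 0 := by
  have hc : (0 : ℝ) < (n.choose k : ℝ) := by exact_mod_cast Nat.choose_pos hkn
  have hp : esymmPoly n u k = 0 := by
    have := h
    rw [esymmMean, _root_.div_eq_zero_iff] at this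
    rcases this with h' | h'
    · exact h'
    · exact absurd h' (ne_of_gt hc)
  rw [esymmMean, esymmPoly_zero_succ hu hp, zero_div]

lemma esymmMean_zero' : esymmMean n u 0 = 1 := by
  simp [esymmMean, esymmPoly]

lemma pow_chain (hu : ∀ i, 0 ≤ u i) :
    ∀ k, 1 ≤ k → k + 1 ≤ n → esymmMean n u (k + 1) ^ k ≤ esymmMean n u k ^ (k + 1) := by
  intro k hk
  induction k, hk using Nat.le_induction with
  | base =>
    intro h2
    have := newton_fin (u := u) (le_refl 1) h2
    simpa [esymmMean_zero'] using this
  | succ k hk ih =>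
    intro hkn
    have hIH := ih (by omega)
    have hN : esymmMean n u k * esymmMean n u (k + 2) ≤ esymmMean n u (k + 1) ^ 2 := by
      have := newton_fin (u := u) (ℓ := k + 1) (by omega) (by omega)
      simpa [show k + 1 - 1 = k from rfl, show k + 1 + 1 = k + 2 from rfl] using this
    set a := esymmMean n u k with ha
    set b := esymmMean n u (k + 1) with hb
    set c := esymmMean n u (k + 2) with hc
    have ha0 : 0 ≤ a := esymmMean_nonneg hu k
    have hb0 : 0 ≤ b := esymmMean_nonneg hu (k + 1)
    have hc0 : 0 ≤ c := esymmMean_nonneg hu (k + 2)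
    by_cases hz : b = 0
    · have : c = 0 := by
        rw [hc, show k + 2 = (k + 1) + 1 from rfl]
        exact esymmMean_zero_succ hu (by omega) hz
      rw [this, hz]
      rw [zero_pow (by omega), zero_pow (by omega)]
    · have hbpos : 0 < b := lt_of_le_of_ne hb0 (Ne.symm hz)
      have hapos : 0 < a := by
        rcases lt_or_eq_of_le ha0 with h | h
        · exact h
        · exfalso
          have : b ^ k ≤ 0 := by
            calc b ^ k ≤ a ^ (k + 1) := hIH
            _ = 0 := by rw [← h, zero_pow (by omega)]
          exact absurd (pow_pos hbpos k) (not_lt.2 this)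
      have h1 : c ^ (k + 1) * a ^ (k + 1) ≤ (b ^ 2) ^ (k + 1) := by
        rw [← mul_pow]
        apply pow_le_pow_left₀ (mul_nonneg hc0 ha0)
        linarith [hN]
      have h2 : (b ^ 2) ^ (k + 1) = b ^ (k + 2) * b ^ k := by ring
      have h3 : b ^ (k + 2) * b ^ k ≤ b ^ (k + 2) * a ^ (k + 1) :=
        mul_le_mul_of_nonneg_left hIH (pow_nonneg hb0 _)
      have h4 : c ^ (k + 1) * a ^ (k + 1) ≤ b ^ (k + 2) * a ^ (k + 1) := by
        calc c ^ (k + 1) * a ^ (k + 1) ≤ (b ^ 2) ^ (k + 1) := h1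
          _ = b ^ (k + 2) * b ^ k := h2
          _ ≤ b ^ (k + 2) * a ^ (k + 1) := h3
      exact le_of_mul_le_mul_right h4 (pow_pos hapos (k + 1))

lemma rpow_step (hu : ∀ i, 0 ≤ u i) (k : ℕ) (hk : 1 ≤ k) (hkn : k + 1 ≤ n) :
    esymmMean n u (k + 1) ^ (1 / ((k + 1 : ℕ) : ℝ)) ≤ esymmMean n u k ^ (1 / ((k : ℕ) : ℝ)) := by
  set a := esymmMean n u k with ha
  set b := esymmMean n u (k + 1) with hb
  have ha0 : 0 ≤ a := esymmMean_nonneg hu k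
  have hb0 : 0 ≤ b := esymmMean_nonneg hu (k + 1)
  have h := pow_chain hu k hk hkn
  have hk0 : ((k : ℕ) : ℝ) ≠ 0 := by positivity
  have hk10 : (((k + 1 : ℕ)) : ℝ) ≠ 0 := by positivity
  have e1 : b ^ (1 / ((k + 1 : ℕ) : ℝ)) = (b ^ (k : ℕ)) ^ (1 / (((k : ℕ) : ℝ) * (((k + 1 : ℕ)) : ℝ))) := by
    rw [← Real.rpow_natCast b k, ← Real.rpow_mul hb0]
    congr 1
    field_simp
  have e2 : a ^ (1 / ((k : ℕ) : ℝ)) = (a ^ (k + 1 : ℕ)) ^ (1 / (((k : ℕ) : ℝ) * (((k + 1 : ℕ)) : ℝ))) := by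
    rw [← Real.rpow_natCast a (k + 1), ← Real.rpow_mul ha0]
    congr 1
    push_cast
    field_simp
  rw [e1, e2]
  exact Real.rpow_le_rpow (by positivity) h (by positivity)


end MacFin

namespace MacFin2
open MacFin

variable {n : ℕ} {u : Fin n → ℝ}

lemma chain (hu : ∀ i, 0 ≤ u i) (ℓ : ℕ) (h1 : 1 ≤ ℓ) :
    ∀ ℓ', ℓ < ℓ' → ℓ' ≤ n →
      esymmMean n u ℓ' ^ (1 / (ℓ' : ℝ)) ≤ esymmMean n u ℓ ^ (1 / (ℓ : ℝ)) := by
  intro ℓ'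
  induction ℓ' with
  | zero => omega
  | succ m ih =>
    intro hlt hle
    rcases Nat.lt_or_ge ℓ m with hm | hm
    · calc esymmMean n u (m + 1) ^ (1 / ((m + 1 : ℕ) : ℝ))
          ≤ esymmMean n u m ^ (1 / ((m : ℕ) : ℝ)) := rpow_step hu m (by omega) hle
        _ ≤ esymmMean n u ℓ ^ (1 / (ℓ : ℝ)) := ih hm (by omega)
    · have : ℓ = m := by omega
      subst this
      exact_mod_cast rpow_step hu ℓ h1 hle

lemma all_eq_mean (hu : ∀ i, 0 ≤ u i) (hU : ∀ i j, u i = u j) (hn : 0 < n)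
    (k : ℕ) (hk : k ≤ n) :
    esymmMean n u k = u ⟨0, hn⟩ ^ k := by
  set c := u ⟨0, hn⟩ with hc
  have hpoly : esymmPoly n u k = (n.choose k : ℝ) * c ^ k := by
    rw [esymmPoly]
    have : ∀ t ∈ Finset.powersetCard k (Finset.univ : Finset (Fin n)),
        (∏ i ∈ t, u i) = c ^ k := by
      intro t ht
      rw [Finset.mem_powersetCard] at ht
      rw [show (∏ i ∈ t, u i) = ∏ _i ∈ t, c from Finset.prod_congr rfl fun i _ => hU i _,
        Finset.prod_const, ht.2]
    rw [Finset.sum_congr rfl this, Finset.sum_const, Finset.card_powersetCard,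
      Finset.card_univ, Fintype.card_fin, nsmul_eq_mul]
  rw [esymmMean, hpoly]
  have hcp : (0 : ℝ) < (n.choose k : ℝ) := by exact_mod_cast Nat.choose_pos hk
  field_simp

lemma rpow_pow_inv {c : ℝ} (hc : 0 ≤ c) {k : ℕ} (hk : 1 ≤ k) :
    (c ^ k) ^ (1 / (k : ℝ)) = c := by
  have hk0 : ((k : ℕ) : ℝ) ≠ 0 := by positivity
  rw [← Real.rpow_natCast c k, ← Real.rpow_mul hc]
  rw [show (k : ℝ) * (1 / (k : ℝ)) = 1 from by field_simp]
  exact Real.rpow_one c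


end MacFin2

/-- Maclaurin's inequality: for nonnegative `u` and `1 ≤ ℓ < ℓ' ≤ n`,
`S_ℓ(u)^{1/ℓ} ≥ S_{ℓ'}(u)^{1/ℓ'}`, with equality when all the `u_i` are equal. -/
theorem maclaurin_inequality (n : ℕ) (u : Fin n → ℝ) (hu : ∀ i, 0 ≤ u i)
    (ℓ ℓ' : ℕ) (h1 : 1 ≤ ℓ) (h2 : ℓ < ℓ') (h3 : ℓ' ≤ n) :
    esymmMean n u ℓ' ^ (1 / (ℓ' : ℝ)) ≤ esymmMean n u ℓ ^ (1 / (ℓ : ℝ)) ∧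
    ((∀ i j, u i = u j) →
      esymmMean n u ℓ' ^ (1 / (ℓ' : ℝ)) = esymmMean n u ℓ ^ (1 / (ℓ : ℝ))) := by
  constructor
  · exact MacFin2.chain hu ℓ h1 ℓ' h2 h3
  · intro hU
    have hn : 0 < n := by omega
    have hc := hu ⟨0, hn⟩
    rw [MacFin2.all_eq_mean hu hU hn ℓ (by omega), MacFin2.all_eq_mean hu hU hn ℓ' h3,
      MacFin2.rpow_pow_inv hc h1, MacFin2.rpow_pow_inv hc (by omega : 1 ≤ ℓ')]
end

section
/- Let d be a positive even integer and Z_1,…,Z_n independent symmetric random variables with values in [-1,1]. Then E|∑_i Z_i|^d ≤ ∑_{j : multiindices with even entries summing to d} C(d; 2j) · ∏_{i : j_i ≠ 0} Var(Z_i), where C(d; 2j) is the multinomial coefficient. -/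
open MeasureTheory ProbabilityTheory Finset

section Aux

variable {Ω : Type*} [MeasureSpace Ω] [IsProbabilityMeasure (ℙ : Measure Ω)]

lemma aux_odd_moment {Z : Ω → ℝ} (hsym : IdentDistrib Z (fun ω => -(Z ω)) ℙ ℙ)
    {m : ℕ} (hm : Odd m) : ∫ ω, Z ω ^ m ∂ℙ = 0 := by
  have h := (hsym.comp (measurable_id.pow_const m)).integral_eq
  simp only [Function.comp_def, id_eq] at h
  have h2 : (fun ω => (-(Z ω)) ^ m) = fun ω => -(Z ω ^ m) := funext fun ω => hm.neg_pow _
  rw [h2, integral_neg] at h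
  linarith

lemma aux_integrable_prod_pow {n : ℕ} (Z : Fin n → Ω → ℝ) (hmeas : ∀ i, Measurable (Z i))
    (hbdd : ∀ i, ∀ᵐ ω ∂ℙ, |Z i ω| ≤ 1) (s : Finset (Fin n)) (k : Fin n → ℕ) :
    Integrable (fun ω => ∏ i ∈ s, Z i ω ^ k i) ℙ := by
  have hm : Measurable fun ω => ∏ i ∈ s, Z i ω ^ k i :=
    Finset.measurable_prod _ fun i _ => (hmeas i).pow_const _
  refine (integrable_const (1:ℝ)).mono' hm.aestronglyMeasurable ?_
  filter_upwards [ae_all_iff.2 hbdd] with ω hω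
  rw [Real.norm_eq_abs, Finset.abs_prod]
  exact Finset.prod_le_one (fun i _ => abs_nonneg _)
    (fun i _ => by rw [abs_pow]; exact pow_le_one₀ (abs_nonneg _) (hω i))

lemma aux_integral_prod {n : ℕ} (Z : Fin n → Ω → ℝ) (hmeas : ∀ i, Measurable (Z i))
    (hindep : iIndepFun Z ℙ)
    (k : Fin n → ℕ) (s : Finset (Fin n)) :
    ∫ ω, ∏ i ∈ s, Z i ω ^ k i ∂ℙ = ∏ i ∈ s, ∫ ω, Z i ω ^ k i ∂ℙ := by
  classical
  have hgind : iIndepFun (fun j => (fun x => x ^ k j) ∘ Z j) ℙ :=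
    hindep.comp _ (fun j => measurable_id.pow_const (k j))
  induction s using Finset.cons_induction with
  | empty => simp
  | cons i s hi ih =>
    have hIF : IndepFun (∏ j ∈ s, ((fun x => x ^ k j) ∘ Z j)) ((fun x => x ^ k i) ∘ Z i) ℙ :=
      hgind.indepFun_finsetProd_of_notMem
        (fun j => (measurable_id.pow_const (k j)).comp (hmeas j)) hi
    have hPeq : (∏ j ∈ s, ((fun x => x ^ k j) ∘ Z j)) = fun ω => ∏ j ∈ s, Z j ω ^ k j := by
      funext ω; simp [Function.comp]
    have hmul := hIF.symm.integral_mul_eq_mul_integral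
      (((measurable_id.pow_const (k i)).comp (hmeas i)).aestronglyMeasurable)
      (by rw [hPeq]; exact (Finset.measurable_prod _ fun j _ =>
        (hmeas j).pow_const _).aestronglyMeasurable)
    rw [hPeq] at hmul
    have : ∫ ω, ∏ j ∈ cons i s hi, Z j ω ^ k j ∂ℙ
        = ∫ ω, (Z i ω ^ k i) * ∏ j ∈ s, Z j ω ^ k j ∂ℙ := by
      congr 1; funext ω; rw [Finset.prod_cons]
    rw [this, Finset.prod_cons, ← ih]
    simpa [Function.comp] using hmul

end Aux

section Aux2

variable {Ω : Type*} [MeasureSpace Ω] [IsProbabilityMeasure (ℙ : Measure Ω)]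

lemma aux_var {Z : Ω → ℝ} (hmeas : Measurable Z) (hsym : IdentDistrib Z (fun ω => -(Z ω)) ℙ ℙ)
    (hbdd : ∀ᵐ ω ∂ℙ, |Z ω| ≤ 1) : variance Z ℙ = ∫ ω, Z ω ^ 2 ∂ℙ := by
  have hL2 : MemLp Z 2 ℙ :=
    (memLp_top_of_bound hmeas.aestronglyMeasurable 1
      (by simpa [Real.norm_eq_abs] using hbdd)).mono_exponent le_top
  have hmean : ∫ ω, Z ω ∂ℙ = 0 := by
    have := aux_odd_moment hsym (odd_one)
    simpa using this
  rw [variance_eq_sub hL2]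
  simp only [Pi.pow_apply]
  rw [hmean]
  ring

lemma aux_moment_le_var {Z : Ω → ℝ} (hmeas : Measurable Z)
    (hsym : IdentDistrib Z (fun ω => -(Z ω)) ℙ ℙ)
    (hbdd : ∀ᵐ ω ∂ℙ, |Z ω| ≤ 1) {m : ℕ} (hm : m ≠ 0) :
    ∫ ω, Z ω ^ (2 * m) ∂ℙ ≤ variance Z ℙ := by
  rw [aux_var hmeas hsym hbdd]
  refine integral_mono_ae ?_ ?_ ?_
  · have h : Measurable fun ω => Z ω ^ (2 * m) := hmeas.pow_const _
    refine (integrable_const (1:ℝ)).mono' h.aestronglyMeasurable ?_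
    filter_upwards [hbdd] with ω hω
    rw [Real.norm_eq_abs, abs_pow]
    exact pow_le_one₀ (abs_nonneg _) hω
  · have h : Measurable fun ω => Z ω ^ 2 := hmeas.pow_const _
    refine (integrable_const (1:ℝ)).mono' h.aestronglyMeasurable ?_
    filter_upwards [hbdd] with ω hω
    rw [Real.norm_eq_abs, abs_pow]
    exact pow_le_one₀ (abs_nonneg _) hω
  · filter_upwards [hbdd] with ω hω
    calc Z ω ^ (2 * m) = |Z ω| ^ (2 * m) := by
          rw [← abs_pow, abs_of_nonneg ((even_two_mul m).pow_nonneg _)]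
      _ ≤ |Z ω| ^ 2 := pow_le_pow_of_le_one (abs_nonneg _) hω
          (by omega)
      _ = Z ω ^ 2 := sq_abs _

end Aux2

/-- Moment bound for sums of independent symmetric `[-1,1]`-valued random variables:
for even `d > 0`,
`E|∑ Z_i|^d ≤ ∑_{j : ∑ 2 j_i = d} C(d; 2j) ∏_{i : j_i ≠ 0} Var(Z_i)`. -/
theorem symmetric_sum_moment_bound
    {Ω : Type*} [MeasureSpace Ω] [IsProbabilityMeasure (ℙ : Measure Ω)]
    (n : ℕ) (Z : Fin n → Ω → ℝ) (hmeas : ∀ i, Measurable (Z i))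
    (hindep : iIndepFun Z ℙ)
    (hsym : ∀ i, IdentDistrib (Z i) (fun ω => -(Z i ω)) ℙ ℙ)
    (hbdd : ∀ i, ∀ᵐ ω ∂ℙ, |Z i ω| ≤ 1)
    (d : ℕ) (hd : Even d) (hd0 : 0 < d) :
    (∫ ω, |∑ i, Z i ω| ^ d ∂ℙ) ≤
      ∑ j ∈ Finset.Nat.antidiagonalTuple n (d / 2),
        ((d.factorial : ℝ) / ∏ i, ((2 * j i).factorial : ℝ)) *
          ∏ i ∈ Finset.univ.filter (fun i => j i ≠ 0), variance (Z i) ℙ := by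
  classical
  -- the moment of each single variable
  set M : (Fin n → ℕ) → Fin n → ℝ := fun k i => ∫ ω, Z i ω ^ k i ∂ℙ with hM
  -- Step 1: expand the integral
  have step1 : (∫ ω, |∑ i, Z i ω| ^ d ∂ℙ)
      = ∑ k ∈ piAntidiag univ d, (Nat.multinomial univ k : ℝ) * ∏ i, M k i := by
    have habs : ∀ ω, |∑ i, Z i ω| ^ d = ∑ k ∈ piAntidiag univ d,
        (Nat.multinomial univ k : ℝ) * ∏ i, Z i ω ^ k i := by
      intro ω
      rw [hd.pow_abs, Finset.sum_pow_eq_sum_piAntidiag]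
    simp only [habs]
    rw [integral_finset_sum]
    · refine Finset.sum_congr rfl fun k _ => ?_
      rw [integral_const_mul, aux_integral_prod Z hmeas hindep k]
    · intro k _
      exact (aux_integrable_prod_pow Z hmeas hbdd univ k).const_mul _
  -- Steps 2&3: odd terms vanish; reindex by halving
  have step2 : ∑ k ∈ piAntidiag univ d, (Nat.multinomial univ k : ℝ) * ∏ i, M k i
      = ∑ j ∈ piAntidiag univ (d / 2),
          (Nat.multinomial univ ((2:ℕ) • j) : ℝ) * ∏ i, M ((2:ℕ) • j) i := by
    refine Eq.trans (Finset.sum_filter_of_ne (p := fun f : Fin n → ℕ => ∀ i, 2 ∣ f i)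
      fun k _ hne => fun i => ?_).symm ?_
    · by_contra hi
      have : M k i = 0 := aux_odd_moment (hsym i) (Nat.odd_iff.2 (by omega))
      exact hne (by rw [Finset.prod_eq_zero (Finset.mem_univ i) this, mul_zero])
    · refine Finset.sum_nbij' (fun k i => k i / 2) (fun j => (2:ℕ) • j) ?_ ?_ ?_ ?_ ?_
      · intro k hk
        obtain ⟨hk1, hdvd⟩ := Finset.mem_filter.1 hk
        obtain ⟨hksum, -⟩ := Finset.mem_piAntidiag.1 hk1
        refine Finset.mem_piAntidiag.2 ⟨?_, fun i _ => Finset.mem_univ i⟩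
        rw [← Nat.sum_div (fun i _ => hdvd i), hksum]
      · intro j hj
        obtain ⟨hjsum, -⟩ := Finset.mem_piAntidiag.1 hj
        refine Finset.mem_filter.2 ⟨Finset.mem_piAntidiag.2 ⟨?_, fun i _ => Finset.mem_univ i⟩,
          fun i => ⟨j i, by simp [smul_eq_mul]⟩⟩
        simp only [Pi.smul_apply, smul_eq_mul, ← Finset.mul_sum, hjsum]
        exact Nat.two_mul_div_two_of_even hd
      · intro k hk
        obtain ⟨-, hdvd⟩ := Finset.mem_filter.1 hk
        funext i
        obtain ⟨c, hc⟩ := hdvd i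
        simp [hc, smul_eq_mul]
      · intro j _
        funext i
        simp [smul_eq_mul]
      · intro k hk
        obtain ⟨-, hdvd⟩ := Finset.mem_filter.1 hk
        have hkk : ((2:ℕ) • fun i => k i / 2) = k := by
          funext i; obtain ⟨c, hc⟩ := hdvd i; simp [hc, smul_eq_mul]
        rw [hkk]
  -- Step 4: bound each term
  rw [step1, step2, Finset.piAntidiag_univ_fin_eq_antidiagonalTuple (d/2) n]
  refine Finset.sum_le_sum fun j hj => ?_
  have hjsum : ∑ i, j i = d / 2 := by
    rw [← Finset.piAntidiag_univ_fin_eq_antidiagonalTuple (d/2) n] at hj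
    exact (Finset.mem_piAntidiag.1 hj).1
  have h2j : ((2:ℕ) • j) = fun i => 2 * j i := by funext i; simp [smul_eq_mul]
  rw [h2j]
  -- multinomial coefficient equals the ratio of factorials
  have hcoef : (Nat.multinomial univ (fun i => 2 * j i) : ℝ)
      = (d.factorial : ℝ) / ∏ i, ((2 * j i).factorial : ℝ) := by
    have hspec := Nat.multinomial_spec univ (fun i => 2 * j i)
    have hsum : ∑ i, 2 * j i = d := by
      rw [← Finset.mul_sum, hjsum, Nat.two_mul_div_two_of_even hd]
    rw [hsum] at hspec
    have hprodne : (∏ i, ((2 * j i).factorial : ℝ)) ≠ 0 :=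
      Finset.prod_ne_zero_iff.2 fun i _ => Nat.cast_ne_zero.2 (Nat.factorial_ne_zero _)
    rw [eq_div_iff hprodne, mul_comm]
    exact_mod_cast congrArg (Nat.cast (R := ℝ)) hspec
  rw [hcoef]
  refine mul_le_mul_of_nonneg_left ?_ (div_nonneg (Nat.cast_nonneg _)
    (Finset.prod_nonneg fun i _ => Nat.cast_nonneg _))
  -- bound the product of moments by the product of variances
  have hsplit : (∏ i, M (fun i => 2 * j i) i)
      = (∏ i ∈ univ.filter (fun i => j i ≠ 0), M (fun i => 2 * j i) i)
        * ∏ i ∈ univ.filter (fun i => ¬ j i ≠ 0), M (fun i => 2 * j i) i :=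
    (Finset.prod_filter_mul_prod_filter_not univ _ _).symm
  have hone : (∏ i ∈ univ.filter (fun i => ¬ j i ≠ 0), M (fun i => 2 * j i) i) = 1 := by
    refine Finset.prod_eq_one fun i hi => ?_
    have : j i = 0 := not_not.1 (Finset.mem_filter.1 hi).2
    simp [hM, this]
  rw [hsplit, hone, mul_one]
  refine Finset.prod_le_prod (fun i _ => ?_) (fun i hi => ?_)
  · -- nonnegativity of even moments
    exact integral_nonneg fun ω => (even_two_mul (j i)).pow_nonneg _
  · exact aux_moment_le_var (hmeas i) (hsym i) (hbdd i)
      (Finset.mem_filter.1 hi).2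
end

section
/- Let Z_1,…,Z_n be i.i.d. symmetric random variables taking values in {-1,0,1} with Var(Z_i) = σ². Then for every positive even integer d, E|∑_{i=1}^n Z_i|^d = ∑_{ℓ=1}^{d/2} (∑_{(j_1,…,j_ℓ), each j_i ≥ 1, ∑ j_i = d/2} d!/∏_i (2j_i)!) · C(n,ℓ) · σ^{2ℓ}. -/
open MeasureTheory ProbabilityTheory Finset



lemma comb_step (n d : ℕ) (hd : Even d) (hd0 : 0 < d) (σ2 : ℝ) :
    ∑ k ∈ Finset.piAntidiag (univ : Finset (Fin n)) d,
        (Nat.multinomial univ k : ℝ) *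
          ∏ i, (if k i = 0 then (1:ℝ) else if Even (k i) then σ2 else 0) =
      ∑ ℓ ∈ Finset.Icc 1 (d / 2),
        (∑ j ∈ (Finset.Nat.antidiagonalTuple ℓ (d / 2)).filter (fun j => ∀ i, 1 ≤ j i),
            (d.factorial : ℝ) / ∏ i, ((2 * j i).factorial : ℝ)) *
          (n.choose ℓ : ℝ) * σ2 ^ ℓ := by
  classical
  have hd2 : 2 ∣ d := hd.two_dvd
  have hd2' : 2 * (d / 2) = d := Nat.mul_div_cancel' hd2
  have hdpos2 : 0 < d / 2 := Nat.div_pos (by omega) (by norm_num)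
  -- Step 1: restrict to even tuples
  rw [← Finset.sum_filter_of_ne (p := fun k => ∀ i, Even (k i))
      (by
        intro k hk hne
        by_contra hcon
        push_neg at hcon
        obtain ⟨i, hi⟩ := hcon
        refine hne ?_
        have h0 : k i ≠ 0 := by rintro h; exact hi (h ▸ Even.zero)
        have : (if k i = 0 then (1:ℝ) else if Even (k i) then σ2 else 0) = 0 := by
          simp [h0, hi]
        rw [Finset.prod_eq_zero (Finset.mem_univ i) this, mul_zero])]
  -- Step 2: reindex by halving
  rw [Finset.sum_nbij' (i := fun k => fun i => k i / 2) (j := fun m => fun i => 2 * m i)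
      (t := Finset.piAntidiag (univ : Finset (Fin n)) (d / 2))
      (g := fun m => (Nat.multinomial univ (fun i => 2 * m i) : ℝ) *
        σ2 ^ (univ.filter (fun i => m i ≠ 0)).card)
      (by
        intro k hk
        simp only [Finset.mem_filter, Finset.mem_piAntidiag] at hk ⊢
        obtain ⟨⟨hsum, -⟩, heven⟩ := hk
        constructor
        · have : ∀ i, 2 * (k i / 2) = k i := fun i => Nat.mul_div_cancel' (heven i).two_dvd
          have h2 : 2 * ∑ i, k i / 2 = 2 * (d / 2) := by
            rw [Finset.mul_sum, hd2']
            simp_rw [this]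
            exact hsum
          omega
        · intro i _; exact Finset.mem_univ i)
      (by
        intro m hm
        simp only [Finset.mem_filter, Finset.mem_piAntidiag] at hm ⊢
        obtain ⟨hsum, -⟩ := hm
        refine ⟨⟨?_, fun i _ => Finset.mem_univ i⟩, fun i => ⟨m i, by ring⟩⟩
        rw [← Finset.mul_sum, hsum, hd2'])
      (by
        intro k hk
        simp only [Finset.mem_filter] at hk
        funext i
        exact Nat.mul_div_cancel' (hk.2 i).two_dvd)
      (by
        intro m _
        funext i
        exact Nat.mul_div_cancel_left _ (by norm_num))
      (by
        intro k hk
        simp only [Finset.mem_filter, Finset.mem_piAntidiag] at hk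
        obtain ⟨⟨hsum, -⟩, heven⟩ := hk
        have hk2 : ∀ i, 2 * (k i / 2) = k i := fun i => Nat.mul_div_cancel' (heven i).two_dvd
        have hfilter : Finset.filter (fun i => ¬ k i = 0) univ
            = Finset.filter (fun i => ¬ (k i / 2 = 0)) univ := by
          apply Finset.filter_congr
          intro i _
          have := hk2 i
          constructor <;> intro h <;> omega
        simp only [hk2]
        rw [Finset.prod_ite, Finset.prod_const_one, one_mul]
        have hc : ∀ i ∈ Finset.filter (fun i => ¬ k i = 0) univ,
            (if Even (k i) then σ2 else 0) = σ2 := fun i _ => if_pos (heven i)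
        rw [Finset.prod_congr rfl hc, Finset.prod_const, hfilter])]
  -- Step 3: group by the number of nonzero entries
  rw [← Finset.sum_fiberwise_of_maps_to
      (g := fun m : Fin n → ℕ => (univ.filter (fun i => m i ≠ 0)).card)
      (t := Finset.Icc 1 (d / 2))
      (by
        intro m hm
        simp only [Finset.mem_piAntidiag] at hm
        obtain ⟨hsum, -⟩ := hm
        rw [Finset.mem_Icc]
        constructor
        · by_contra hcon
          have hcard0 : (univ.filter (fun i => m i ≠ 0)).card = 0 :=
            Nat.lt_one_iff.mp (not_le.mp hcon)
          have h0 : (univ.filter (fun i => m i ≠ 0)) = ∅ := Finset.card_eq_zero.mp hcard0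
          have : ∀ i : Fin n, m i = 0 := by
            intro i
            by_contra hne
            have : i ∈ univ.filter (fun i => m i ≠ 0) := by
              simp [hne]
            simp [h0] at this
          rw [Finset.sum_eq_zero (fun i _ => this i)] at hsum
          omega
        · calc (univ.filter (fun i => m i ≠ 0)).card
              = ∑ i ∈ univ.filter (fun i => m i ≠ 0), 1 := by
                simp
            _ ≤ ∑ i ∈ univ.filter (fun i => m i ≠ 0), m i := by
                apply Finset.sum_le_sum
                intro i hi
                simp only [Finset.mem_filter] at hi
                omega
            _ = ∑ i, m i := Finset.sum_filter_ne_zero _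
            _ = d / 2 := hsum)]
  apply Finset.sum_congr rfl
  intro ℓ hℓ
  -- Step 4: evaluate terms and factor out `σ2 ^ ℓ`
  have hval : ∀ m ∈ (Finset.piAntidiag (univ : Finset (Fin n)) (d / 2)).filter
        (fun m => (univ.filter (fun i => m i ≠ 0)).card = ℓ),
      (Nat.multinomial univ (fun i => 2 * m i) : ℝ) *
          σ2 ^ (univ.filter (fun i => m i ≠ 0)).card
        = ((d.factorial : ℝ) / ∏ i, ((2 * m i).factorial : ℝ)) * σ2 ^ ℓ := by
    intro m hm
    simp only [Finset.mem_filter, Finset.mem_piAntidiag] at hm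
    obtain ⟨⟨hsum, -⟩, hcard⟩ := hm
    rw [hcard]
    congr 1
    have hsum2 : ∑ i, 2 * m i = d := by rw [← Finset.mul_sum, hsum, hd2']
    have hspec := Nat.multinomial_spec univ (fun i => 2 * m i)
    rw [hsum2] at hspec
    have hne : (∏ i, ((2 * m i).factorial : ℝ)) ≠ 0 := by positivity
    rw [eq_div_iff hne]
    rw [mul_comm]
    exact_mod_cast hspec
  rw [Finset.sum_congr rfl hval, ← Finset.sum_mul]
  have hkey : ∑ m ∈ (Finset.piAntidiag (univ : Finset (Fin n)) (d / 2)).filter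
        (fun m => (univ.filter (fun i => m i ≠ 0)).card = ℓ),
      ((d.factorial : ℝ) / ∏ i, ((2 * m i).factorial : ℝ))
      = (∑ j ∈ (Finset.Nat.antidiagonalTuple ℓ (d / 2)).filter (fun j => ∀ i, 1 ≤ j i),
          (d.factorial : ℝ) / ∏ i, ((2 * j i).factorial : ℝ)) * (n.choose ℓ : ℝ) := by
    rw [← Finset.sum_fiberwise_of_maps_to
        (g := fun m : Fin n → ℕ => univ.filter (fun i => m i ≠ 0))
        (t := Finset.powersetCard ℓ (univ : Finset (Fin n)))
        (by
          intro m hm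
          simp only [Finset.mem_filter] at hm
          rw [Finset.mem_powersetCard_univ]
          exact hm.2)]
    have hinner : ∀ s ∈ Finset.powersetCard ℓ (univ : Finset (Fin n)),
        (∑ m ∈ ((Finset.piAntidiag (univ : Finset (Fin n)) (d / 2)).filter
            (fun m => (univ.filter (fun i => m i ≠ 0)).card = ℓ)).filter
            (fun m => univ.filter (fun i => m i ≠ 0) = s),
          ((d.factorial : ℝ) / ∏ i, ((2 * m i).factorial : ℝ)))
        = ∑ j ∈ (Finset.Nat.antidiagonalTuple ℓ (d / 2)).filter (fun j => ∀ i, 1 ≤ j i),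
            (d.factorial : ℝ) / ∏ i, ((2 * j i).factorial : ℝ) := by
      intro s hs
      rw [Finset.mem_powersetCard_univ] at hs
      set e := s.orderIsoOfFin hs with he
      apply Finset.sum_nbij' (i := fun m => fun a => m ((e a : Fin n)))
        (j := fun jf => fun x => if hx : x ∈ s then jf (e.symm ⟨x, hx⟩) else 0)
      · intro m hm
        simp only [Finset.mem_filter, Finset.mem_piAntidiag] at hm
        obtain ⟨⟨⟨hsum, -⟩, -⟩, hsupp⟩ := hm
        simp only [Finset.mem_filter, Finset.Nat.mem_antidiagonalTuple]
        constructor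
        · have h1 : ∑ a : Fin ℓ, m ((e a : Fin n)) = ∑ x : {x // x ∈ s}, m x :=
            Equiv.sum_comp e.toEquiv (fun x : {x // x ∈ s} => m x)
          rw [h1, Finset.sum_coe_sort s (fun x => m x)]
          rw [← hsum]
          apply Finset.sum_subset (Finset.subset_univ s)
          intro x _ hx
          by_contra hne
          have : x ∈ univ.filter (fun i => m i ≠ 0) := by simp [hne]
          rw [hsupp] at this
          exact hx this
        · intro a
          have hmem : ((e a : Fin n)) ∈ univ.filter (fun i => m i ≠ 0) := by
            rw [hsupp]; exact (e a).2
          simp only [Finset.mem_filter] at hmem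
          omega
      · intro jf hjf
        simp only [Finset.mem_filter, Finset.Nat.mem_antidiagonalTuple] at hjf
        obtain ⟨hjsum, hjpos⟩ := hjf
        have hsupp : (univ.filter (fun x =>
            (if hx : x ∈ s then jf (e.symm ⟨x, hx⟩) else 0) ≠ 0)) = s := by
          ext x
          simp only [Finset.mem_filter, Finset.mem_univ, true_and]
          constructor
          · intro hx
            by_contra hxs
            rw [dif_neg hxs] at hx
            exact hx rfl
          · intro hx
            rw [dif_pos hx]
            have := hjpos (e.symm ⟨x, hx⟩)
            omega
        simp only [Finset.mem_filter, Finset.mem_piAntidiag]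
        refine ⟨⟨⟨?_, fun i _ => Finset.mem_univ i⟩, by rw [hsupp, hs]⟩, hsupp⟩
        rw [← Finset.sum_subset (Finset.subset_univ s) (fun x _ hx => dif_neg hx)]
        rw [← Finset.sum_coe_sort s
          (fun x => if hx : x ∈ s then jf (e.symm ⟨x, hx⟩) else 0)]
        have : ∀ x : {x // x ∈ s},
            (if hx : (x : Fin n) ∈ s then jf (e.symm ⟨x, hx⟩) else 0) = jf (e.symm x) := by
          intro x
          rw [dif_pos x.2]
        rw [Finset.sum_congr rfl (fun x _ => this x)]
        have h2 : ∑ x : {x // x ∈ s}, jf (e.symm x) = ∑ a, jf a :=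
          Fintype.sum_equiv e.symm.toEquiv _ _ (fun x => rfl)
        rw [h2]
        exact hjsum
      · intro m hm
        simp only [Finset.mem_filter, Finset.mem_piAntidiag] at hm
        obtain ⟨-, hsupp⟩ := hm
        funext x
        by_cases hx : x ∈ s
        · rw [dif_pos hx]
          show m ↑(e (e.symm ⟨x, hx⟩)) = m x
          rw [e.apply_symm_apply]
        · rw [dif_neg hx]
          by_contra hne
          have : x ∈ univ.filter (fun i => m i ≠ 0) := by
            simp only [Finset.mem_filter, Finset.mem_univ, true_and]
            omega
          rw [hsupp] at this
          exact hx this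
      · intro jf hjf
        funext a
        have hmem : ((e a : Fin n)) ∈ s := (e a).2
        show (if hx : (e a : Fin n) ∈ s then jf (e.symm ⟨(e a : Fin n), hx⟩) else 0) = jf a
        rw [dif_pos hmem]
        have h3 : (⟨(e a : Fin n), hmem⟩ : {x // x ∈ s}) = e a := rfl
        rw [h3, e.symm_apply_apply]
      · intro m hm
        simp only [Finset.mem_filter, Finset.mem_piAntidiag] at hm
        obtain ⟨⟨-, -⟩, hsupp⟩ := hm
        congr 1
        have h1 : ∏ a : Fin ℓ, ((2 * m ((e a : Fin n))).factorial : ℝ)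
            = ∏ x : {x // x ∈ s}, ((2 * m x).factorial : ℝ) :=
          Equiv.prod_comp e.toEquiv (fun x : {x // x ∈ s} => ((2 * m x).factorial : ℝ))
        rw [h1, Finset.prod_coe_sort s (fun x => ((2 * m x).factorial : ℝ))]
        symm
        apply Finset.prod_subset (Finset.subset_univ s)
        intro x _ hx
        have hm0 : m x = 0 := by
          by_contra hne
          have : x ∈ univ.filter (fun i => m i ≠ 0) := by simp [hne]
          rw [hsupp] at this
          exact hx this
        simp [hm0]
    rw [Finset.sum_congr rfl hinner, Finset.sum_const, Finset.card_powersetCard,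
      Finset.card_univ, Fintype.card_fin, nsmul_eq_mul, mul_comm]
  rw [hkey]


lemma integral_prod_of_indep {Ω : Type*} [MeasureSpace Ω] [IsProbabilityMeasure (ℙ : Measure Ω)]
    {ι : Type*} {X : ι → Ω → ℝ}
    (hindep : iIndepFun X ℙ)
    (hmeas : ∀ i, Measurable (X i)) (hint : ∀ i, Integrable (X i) ℙ) (s : Finset ι) :
    Integrable (fun ω => ∏ i ∈ s, X i ω) ℙ ∧
      (∫ ω, ∏ i ∈ s, X i ω ∂ℙ) = ∏ i ∈ s, ∫ ω, X i ω ∂ℙ := by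
  classical
  induction s using Finset.cons_induction with
  | empty => simp
  | cons a s ha ih =>
    have hprodeq : (∏ i ∈ s, X i) = fun ω => ∏ i ∈ s, X i ω := by
      funext ω; rw [Finset.prod_apply]
    have hIndep : IndepFun (X a) (fun ω => ∏ i ∈ s, X i ω) ℙ := by
      have h := (hindep.indepFun_finset_prod_of_notMem hmeas ha).symm
      rwa [hprodeq] at h
    constructor
    · have h1 : Integrable (fun ω => X a ω * ∏ i ∈ s, X i ω) ℙ :=
        hIndep.integrable_mul (hint a) ih.1
      simp only [Finset.prod_cons]
      exact h1
    · have h2 : (∫ ω, X a ω * (∏ i ∈ s, X i ω) ∂ℙ)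
          = (∫ ω, X a ω ∂ℙ) * ∫ ω, ∏ i ∈ s, X i ω ∂ℙ :=
        hIndep.integral_mul_eq_mul_integral (hint a).1 ih.1.1
      simp only [Finset.prod_cons]
      rw [h2, ih.2]


/-- Exact moment formula for i.i.d. symmetric `{-1,0,1}`-valued random variables with
variance `σ²`: for every positive even `d`,
`E|∑ Z_i|^d = ∑_{ℓ=1}^{d/2} (∑_{j_1,…,j_ℓ ≥ 1, ∑ j_i = d/2} d!/∏ (2j_i)!) C(n,ℓ) σ^{2ℓ}`. -/
theorem iid_three_point_moment_formula
    {Ω : Type*} [MeasureSpace Ω] [IsProbabilityMeasure (ℙ : Measure Ω)]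
    (n : ℕ) (Z : Fin n → Ω → ℝ) (hmeas : ∀ i, Measurable (Z i))
    (hindep : iIndepFun Z ℙ)
    (σ2 : ℝ)
    (hone : ∀ i, ℙ {ω | Z i ω = 1} = ENNReal.ofReal (σ2 / 2))
    (hzero : ∀ i, ℙ {ω | Z i ω = 0} = ENNReal.ofReal (1 - σ2))
    (hmone : ∀ i, ℙ {ω | Z i ω = -1} = ENNReal.ofReal (σ2 / 2))
    (d : ℕ) (hd : Even d) (hd0 : 0 < d) :
    (∫ ω, |∑ i, Z i ω| ^ d ∂ℙ) =
      ∑ ℓ ∈ Finset.Icc 1 (d / 2),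
        (∑ j ∈ (Finset.Nat.antidiagonalTuple ℓ (d / 2)).filter (fun j => ∀ i, 1 ≤ j i),
            (d.factorial : ℝ) / ∏ i, ((2 * j i).factorial : ℝ)) *
          (n.choose ℓ : ℝ) * σ2 ^ ℓ := by
  classical
  have hA : ∀ i, MeasurableSet {ω | Z i ω = 1} := fun i => hmeas i (measurableSet_singleton 1)
  have hB : ∀ i, MeasurableSet {ω | Z i ω = 0} := fun i => hmeas i (measurableSet_singleton 0)
  have hC : ∀ i, MeasurableSet {ω | Z i ω = -1} := fun i => hmeas i (measurableSet_singleton (-1))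
  have hσ : ∀ _i : Fin n, 0 ≤ σ2 ∧ σ2 ≤ 1 := by
    intro i
    have hσ0 : 0 ≤ σ2 := by
      have h1 : ℙ {ω | Z i ω = 0} ≤ 1 := prob_le_one
      rw [hzero i, ENNReal.ofReal_le_one] at h1
      linarith
    refine ⟨hσ0, ?_⟩
    have hdisj : Disjoint {ω | Z i ω = 1} {ω | Z i ω = -1} := by
      rw [Set.disjoint_left]
      rintro ω h1 h2
      simp only [Set.mem_setOf_eq] at h1 h2
      rw [h1] at h2
      norm_num at h2
    have h2 : ℙ ({ω | Z i ω = 1} ∪ {ω | Z i ω = -1}) ≤ 1 := prob_le_one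
    rw [measure_union hdisj (hC i), hone i, hmone i,
      ← ENNReal.ofReal_add (by linarith) (by linarith), ENNReal.ofReal_le_one] at h2
    linarith
  have hae : ∀ i, ∀ᵐ ω ∂ℙ, Z i ω = 1 ∨ Z i ω = 0 ∨ Z i ω = -1 := by
    intro i
    obtain ⟨hσ0, hσ1⟩ := hσ i
    set S := {ω | Z i ω = 1} ∪ ({ω | Z i ω = 0} ∪ {ω | Z i ω = -1}) with hSdef
    have hSm : MeasurableSet S := (hA i).union ((hB i).union (hC i))
    have hdisjBC : Disjoint {ω | Z i ω = 0} {ω | Z i ω = -1} := by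
      rw [Set.disjoint_left]
      rintro ω h1 h2
      simp only [Set.mem_setOf_eq] at h1 h2
      rw [h1] at h2; norm_num at h2
    have hdisjA : Disjoint {ω | Z i ω = 1} ({ω | Z i ω = 0} ∪ {ω | Z i ω = -1}) := by
      rw [Set.disjoint_left]
      rintro ω h1 h2
      simp only [Set.mem_union, Set.mem_setOf_eq] at h2
      simp only [Set.mem_setOf_eq] at h1
      rcases h2 with h2 | h2 <;> rw [h1] at h2 <;> norm_num at h2
    have hS1 : ℙ S = 1 := by
      rw [hSdef, measure_union hdisjA ((hB i).union (hC i)), measure_union hdisjBC (hC i),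
        hone i, hzero i, hmone i,
        ← ENNReal.ofReal_add (by linarith) (by linarith),
        ← ENNReal.ofReal_add (by linarith) (by linarith)]
      rw [show σ2 / 2 + (1 - σ2 + σ2 / 2) = 1 by ring]
      exact ENNReal.ofReal_one
    have hcompl : ℙ Sᶜ = 0 := by
      rw [measure_compl hSm (measure_ne_top _ _), hS1, measure_univ, tsub_self]
    have hmem : ∀ᵐ ω ∂ℙ, ω ∈ S := by
      rw [MeasureTheory.ae_iff]
      have hset : {ω | ¬ ω ∈ S} = Sᶜ := rfl
      rw [hset]
      exact hcompl
    filter_upwards [hmem] with ω hω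
    simpa [hSdef, Set.mem_union, Set.mem_setOf_eq] using hω
  have hmom : ∀ i (m : ℕ), (∫ ω, Z i ω ^ m ∂ℙ)
      = (if m = 0 then 1 else if Even m then σ2 else 0) := by
    intro i m
    rcases Nat.eq_zero_or_pos m with hm | hm
    · subst hm; simp
    obtain ⟨hσ0, hσ1⟩ := hσ i
    have hmne : m ≠ 0 := hm.ne'
    have haeq : (fun ω => Z i ω ^ m) =ᵐ[ℙ]
        fun ω => Set.indicator {ω | Z i ω = 1} (fun _ => (1:ℝ)) ω
          + (-1:ℝ)^m * Set.indicator {ω | Z i ω = -1} (fun _ => (1:ℝ)) ω := by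
      filter_upwards [hae i] with ω hω
      rcases hω with h | h | h
      · rw [Set.indicator_of_mem (show ω ∈ {ω' | Z i ω' = 1} from h),
          Set.indicator_of_notMem
            (show ω ∉ {ω' | Z i ω' = -1} by rw [Set.mem_setOf_eq, h]; norm_num), h]
        simp
      · rw [Set.indicator_of_notMem
            (show ω ∉ {ω' | Z i ω' = 1} by rw [Set.mem_setOf_eq, h]; norm_num),
          Set.indicator_of_notMem
            (show ω ∉ {ω' | Z i ω' = -1} by rw [Set.mem_setOf_eq, h]; norm_num), h]
        simp [zero_pow hmne]
      · rw [Set.indicator_of_notMem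
            (show ω ∉ {ω' | Z i ω' = 1} by rw [Set.mem_setOf_eq, h]; norm_num),
          Set.indicator_of_mem (show ω ∈ {ω' | Z i ω' = -1} from h), h]
        simp
    rw [integral_congr_ae haeq, integral_add ((integrable_const (1:ℝ)).indicator (hA i))
      (((integrable_const (1:ℝ)).indicator (hC i)).const_mul _),
      integral_const_mul, integral_indicator_const _ (hA i),
      integral_indicator_const _ (hC i), measureReal_def, measureReal_def, hone i, hmone i,
      ENNReal.toReal_ofReal (by linarith)]
    rcases Nat.even_or_odd m with hme | hmo
    · rw [if_neg hmne, if_pos hme, hme.neg_one_pow]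
      simp only [smul_eq_mul, mul_one, one_mul]
      ring
    · rw [if_neg hmne, if_neg (Nat.not_even_iff_odd.mpr hmo), hmo.neg_one_pow]
      simp only [smul_eq_mul, mul_one, neg_one_mul]
      ring
  have hZint : ∀ i (m : ℕ), Integrable (fun ω => Z i ω ^ m) ℙ := by
    intro i m
    apply Integrable.mono' (integrable_const (1:ℝ))
      ((hmeas i).pow_const m).aestronglyMeasurable
    filter_upwards [hae i] with ω hω
    rcases Nat.eq_zero_or_pos m with hm | hm
    · subst hm; simp
    rcases hω with h | h | h <;> rw [h] <;>
      simp [zero_pow hm.ne', abs_pow]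
  have hexp : ∀ ω : Ω, |∑ i, Z i ω| ^ d = ∑ k ∈ Finset.piAntidiag (univ : Finset (Fin n)) d,
      (Nat.multinomial univ k : ℝ) * ∏ i, Z i ω ^ k i := by
    intro ω
    rw [hd.pow_abs, Finset.sum_pow_eq_sum_piAntidiag]
  have hprodint : ∀ k : Fin n → ℕ,
      Integrable (fun ω => ∏ i, Z i ω ^ k i) ℙ ∧
        (∫ ω, ∏ i, Z i ω ^ k i ∂ℙ) = ∏ i, ∫ ω, Z i ω ^ k i ∂ℙ := fun k =>
    integral_prod_of_indep (X := fun i ω => Z i ω ^ k i)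
      (hindep.comp _ (fun i => measurable_id.pow_const (k i)))
      (fun i => (hmeas i).pow_const (k i)) (fun i => hZint i (k i)) univ
  calc (∫ ω, |∑ i, Z i ω| ^ d ∂ℙ)
      = ∫ ω, ∑ k ∈ Finset.piAntidiag (univ : Finset (Fin n)) d,
          (Nat.multinomial univ k : ℝ) * ∏ i, Z i ω ^ k i ∂ℙ := by
        exact integral_congr_ae (Filter.Eventually.of_forall hexp)
    _ = ∑ k ∈ Finset.piAntidiag (univ : Finset (Fin n)) d,
          ∫ ω, (Nat.multinomial univ k : ℝ) * ∏ i, Z i ω ^ k i ∂ℙ :=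
        integral_finset_sum _ (fun k _ => ((hprodint k).1).const_mul _)
    _ = ∑ k ∈ Finset.piAntidiag (univ : Finset (Fin n)) d,
          (Nat.multinomial univ k : ℝ) *
            ∏ i, (if k i = 0 then (1:ℝ) else if Even (k i) then σ2 else 0) := by
        refine Finset.sum_congr rfl (fun k _ => ?_)
        rw [integral_const_mul, (hprodint k).2]
        congr 1
        exact Finset.prod_congr rfl (fun i _ => hmom i (k i))
    _ = _ := comb_step n d hd hd0 σ2
end

section
/- Define F(ℓ) = ∑ over ℓ-tuples (j_1,…,j_ℓ) of positive integers with ∑ j_i = d/2 of the multinomial coefficient d!/∏_i (2j_i)!. Then there exist absolute constants c, C > 0 such that c·ℓ ≤ F(ℓ)^{1/d} ≤ C·ℓ for all even d ≥ 2 and 1 ≤ ℓ ≤ d/2. -/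
open Finset

/-- Any multinomial coefficient with `ℓ` parts summing to `d` is at most `ℓ^d`;
in fact the sum of all of them over a set of distinct compositions is. -/
lemma sum_multinomial_le {ℓ d : ℕ} (S : Finset (Fin ℓ → ℕ))
    (hS : ∀ j ∈ S, ∑ i, j i = d) :
    ∑ j ∈ S, Nat.multinomial univ j ≤ ℓ ^ d := by
  have hid : (ℓ : ℕ) ^ d = ∑ k ∈ piAntidiag (univ : Finset (Fin ℓ)) d,
      Nat.multinomial univ k := by
    simpa using Finset.sum_pow_eq_sum_piAntidiag (univ : Finset (Fin ℓ)) (fun _ => (1 : ℕ)) d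
  rw [hid]
  refine Finset.sum_le_sum_of_subset ?_
  intro j hj
  simp only [mem_piAntidiag]
  exact ⟨hS j hj, fun i _ => Finset.mem_univ i⟩

/-- `(d/3)^d ≤ d!` over the reals. -/
lemma pow_div_three_le_factorial (d : ℕ) : ((d : ℝ) / 3) ^ d ≤ (d.factorial : ℝ) := by
  have h1 : (d : ℝ) ^ d / (d.factorial : ℝ) ≤ Real.exp d :=
    Real.pow_div_factorial_le_exp (d:ℝ) (Nat.cast_nonneg d) d
  have h2 : Real.exp (d : ℝ) = Real.exp 1 ^ d := by
    rw [← Real.exp_nat_mul]; ring_nf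
  have h3 : Real.exp 1 ^ d ≤ (3 : ℝ) ^ d :=
    pow_le_pow_left₀ (Real.exp_pos 1).le (Real.exp_one_lt_d9.le.trans (by norm_num)) d
  have hfac : (0 : ℝ) < (d.factorial : ℝ) := by exact_mod_cast d.factorial_pos
  have h4 : (d : ℝ) ^ d ≤ 3 ^ d * (d.factorial : ℝ) := by
    rw [← div_le_iff₀ hfac]
    exact h1.trans (h2.trans_le h3)
  rw [div_pow, div_le_iff₀ (by positivity : (0:ℝ) < 3 ^ d)]
  linarith [h4]

/-- `F(ℓ) = ∑_{(j_1,…,j_ℓ), j_i ≥ 1, ∑ j_i = d/2} d! / ∏ (2 j_i)!`. -/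
noncomputable def Fmulti (d ℓ : ℕ) : ℝ :=
  ∑ j ∈ (Finset.Nat.antidiagonalTuple ℓ (d / 2)).filter (fun j => ∀ i, 1 ≤ j i),
    (d.factorial : ℝ) / ∏ i, ((2 * j i).factorial : ℝ)

/-- There are absolute constants `c, C > 0` such that `c·ℓ ≤ F(ℓ)^{1/d} ≤ C·ℓ`
for all even `d ≥ 2` and `1 ≤ ℓ ≤ d/2`. -/
theorem Fmulti_growth :
    ∃ c C : ℝ, 0 < c ∧ 0 < C ∧
      ∀ d ℓ : ℕ, Even d → 2 ≤ d → 1 ≤ ℓ → ℓ ≤ d / 2 →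
        c * ℓ ≤ (Fmulti d ℓ) ^ (1 / (d : ℝ)) ∧
        (Fmulti d ℓ) ^ (1 / (d : ℝ)) ≤ C * ℓ := by
  refine ⟨1/6, 1, by norm_num, one_pos, fun d ℓ hEven hd hℓ hℓm => ?_⟩
  obtain ⟨m, hm⟩ := hEven
  have hd2 : d / 2 = m := by omega
  have hdm : d = 2 * m := by omega
  have hℓm' : ℓ ≤ m := by omega
  have hm1 : 1 ≤ m := by omega
  have hℓ0 : 0 < ℓ := hℓ
  have hdpos : (0:ℝ) < d := by
    have h0 : 0 < d := by omega
    exact_mod_cast h0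
  have hdne : (d:ℝ) ≠ 0 := ne_of_gt hdpos
  have hrec : (0:ℝ) < 1/(d:ℝ) := by positivity
  set S := (Finset.Nat.antidiagonalTuple ℓ (d / 2)).filter (fun j => ∀ i, 1 ≤ j i) with hS
  -- sums over S
  have hsumS : ∀ j ∈ S, ∑ i, j i = m := by
    intro j hj
    rw [hS, Finset.mem_filter, Finset.Nat.mem_antidiagonalTuple] at hj
    rw [hj.1, hd2]
  have hsum2 : ∀ j ∈ S, ∑ i, 2 * j i = d := by
    intro j hj
    rw [← Finset.mul_sum, hsumS j hj, hdm]
  -- each term equals a multinomial coefficient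
  have hterm : ∀ j ∈ S, (d.factorial : ℝ) / ∏ i, ((2 * j i).factorial : ℝ)
      = (Nat.multinomial univ (fun i => 2 * j i) : ℝ) := by
    intro j hj
    have hspec := Nat.multinomial_spec univ (fun i => 2 * j i)
    rw [hsum2 j hj] at hspec
    have hP : (0:ℝ) < ∏ i, ((2 * j i).factorial : ℝ) := by
      apply Finset.prod_pos; intro i _; exact_mod_cast (2 * j i).factorial_pos
    rw [div_eq_iff (ne_of_gt hP)]
    push_cast [← hspec]
    ring
  have hF0 : 0 ≤ Fmulti d ℓ := by
    apply Finset.sum_nonneg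
    intro j _
    have : (0:ℝ) < ∏ i, ((2 * j i).factorial : ℝ) := by
      apply Finset.prod_pos; intro i _; exact_mod_cast (2 * j i).factorial_pos
    positivity
  -- The rpow simplification
  have hrpow : ∀ x : ℝ, 0 ≤ x → (x ^ d) ^ (1/(d:ℝ)) = x := by
    intro x hx
    rw [← Real.rpow_natCast x d, ← Real.rpow_mul hx, mul_one_div_cancel hdne, Real.rpow_one]
  constructor
  · -- lower bound
    set q := m / ℓ with hq
    set r := m % ℓ with hr
    have hq1 : 1 ≤ q := (Nat.one_le_div_iff hℓ0).mpr hℓm'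
    have hrℓ : r < ℓ := Nat.mod_lt _ hℓ0
    set j0 : Fin ℓ → ℕ := fun i => q + if (i:ℕ) < r then 1 else 0 with hj0
    have hsum0 : ∑ i, j0 i = m := by
      have hind : ∑ i : Fin ℓ, (if (i:ℕ) < r then 1 else 0) = r := by
        rw [Fin.sum_univ_eq_sum_range (fun i => if i < r then 1 else 0) ℓ]
        have he : (Finset.range ℓ).filter (fun i => i < r) = Finset.range r := by
          ext x; simp only [Finset.mem_filter, Finset.mem_range]; omega
        rw [← Finset.sum_filter, he, Finset.sum_const, Finset.card_range, smul_eq_mul, mul_one]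
      have htot : ∑ i : Fin ℓ, j0 i = ℓ * q + r := by
        rw [hj0, Finset.sum_add_distrib, Finset.sum_const, Finset.card_univ, Fintype.card_fin,
          hind, smul_eq_mul]
      rw [htot, hq, hr]
      exact Nat.div_add_mod m ℓ
    have hj0mem : j0 ∈ S := by
      rw [hS, Finset.mem_filter, Finset.Nat.mem_antidiagonalTuple]
      refine ⟨by rw [hsum0, hd2], fun i => ?_⟩
      exact le_trans hq1 (Nat.le_add_right _ _)
    have hj0le : ∀ i, 2 * j0 i ≤ 4 * q := by
      intro i; rw [hj0]; simp only
      have : (if (i:ℕ) < r then 1 else 0) ≤ 1 := by split <;> omega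
      omega
    -- bound the product of factorials
    have hProdNat : ∏ i, (2 * j0 i).factorial ≤ (4 * q) ^ d := by
      calc ∏ i, (2 * j0 i).factorial ≤ ∏ i, (4 * q) ^ (2 * j0 i) := by
            apply Finset.prod_le_prod'
            intro i _
            exact (Nat.factorial_le_pow _).trans (Nat.pow_le_pow_left (hj0le i) _)
        _ = (4 * q) ^ (∑ i, 2 * j0 i) := Finset.prod_pow_eq_pow_sum univ _ _
        _ = (4 * q) ^ d := by rw [hsum2 j0 hj0mem]
    have hqle : (4 * q : ℝ) ≤ 2 * d / ℓ := by
      have h1 : ((q : ℝ)) ≤ (m : ℝ) / ℓ := by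
        rw [hq]; exact_mod_cast Nat.cast_div_le
      have hℓR : (0:ℝ) < ℓ := by exact_mod_cast hℓ0
      have hdR : (d:ℝ) = 2 * m := by exact_mod_cast hdm
      rw [hdR]
      calc (4:ℝ) * q ≤ 4 * ((m:ℝ)/ℓ) := by linarith
        _ = 2 * (2 * (m:ℝ)) / ℓ := by ring
    have hPle : (∏ i, ((2 * j0 i).factorial : ℝ)) ≤ (2 * d / ℓ) ^ d := by
      have h1 : (∏ i, ((2 * j0 i).factorial : ℝ)) ≤ ((4 * q : ℕ) : ℝ) ^ d := by
        exact_mod_cast hProdNat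
      refine h1.trans (pow_le_pow_left₀ (by positivity) ?_ d)
      push_cast
      exact hqle
    have hPpos : (0:ℝ) < ∏ i, ((2 * j0 i).factorial : ℝ) := by
      apply Finset.prod_pos; intro i _; exact_mod_cast (2 * j0 i).factorial_pos
    have hterm0 : ((ℓ:ℝ)/6) ^ d ≤ (d.factorial : ℝ) / ∏ i, ((2 * j0 i).factorial : ℝ) := by
      rw [le_div_iff₀ hPpos]
      have hℓR : (0:ℝ) < ℓ := by exact_mod_cast hℓ0
      calc ((ℓ:ℝ)/6) ^ d * ∏ i, ((2 * j0 i).factorial : ℝ)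
          ≤ ((ℓ:ℝ)/6) ^ d * (2 * d / ℓ) ^ d := by
            apply mul_le_mul_of_nonneg_left hPle (by positivity)
        _ = (((ℓ:ℝ)/6) * (2 * d / ℓ)) ^ d := (mul_pow _ _ _).symm
        _ = ((d:ℝ)/3) ^ d := by
            congr 1
            field_simp
            ring
        _ ≤ (d.factorial : ℝ) := pow_div_three_le_factorial d
    have hFlb : ((ℓ:ℝ)/6) ^ d ≤ Fmulti d ℓ := by
      refine hterm0.trans ?_
      refine Finset.single_le_sum (f := fun j => (d.factorial : ℝ) / ∏ i, ((2 * j i).factorial : ℝ))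
        (fun j _ => ?_) hj0mem
      have : (0:ℝ) < ∏ i, ((2 * j i).factorial : ℝ) := by
        apply Finset.prod_pos; intro i _; exact_mod_cast (2 * j i).factorial_pos
      positivity
    have := Real.rpow_le_rpow (by positivity) hFlb hrec.le
    rw [hrpow ((ℓ:ℝ)/6) (by positivity)] at this
    calc (1/6 : ℝ) * ℓ = (ℓ:ℝ)/6 := by ring
      _ ≤ _ := this
  · -- upper bound
    have hub : Fmulti d ℓ ≤ (ℓ:ℝ) ^ d := by
      have hFeq : Fmulti d ℓ = ((∑ j ∈ S, Nat.multinomial univ (fun i => 2 * j i) : ℕ) : ℝ) := by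
        rw [Fmulti, ← hS, Nat.cast_sum]
        exact Finset.sum_congr rfl hterm
      rw [hFeq]
      have hinj : Set.InjOn (fun (j : Fin ℓ → ℕ) => fun i => 2 * j i) S := by
        intro a _ b _ hab
        funext i
        have := congrFun hab i
        simp only at this
        omega
      have : ∑ j ∈ S, Nat.multinomial univ (fun i => 2 * j i)
          = ∑ k ∈ S.image (fun j => fun i => 2 * j i), Nat.multinomial univ k := by
        rw [Finset.sum_image]
        intro a ha b hb h
        exact hinj ha hb h
      have hle : ∑ j ∈ S, Nat.multinomial univ (fun i => 2 * j i) ≤ ℓ ^ d := by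
        rw [this]
        apply sum_multinomial_le
        intro k hk
        obtain ⟨j, hj, rfl⟩ := Finset.mem_image.mp hk
        exact hsum2 j hj
      exact_mod_cast hle
    have := Real.rpow_le_rpow hF0 hub hrec.le
    rw [hrpow (ℓ:ℝ) (by positivity)] at this
    calc _ ≤ (ℓ:ℝ) := this
      _ = 1 * ℓ := (one_mul _).symm
end
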